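/- arXiv:1403.7641 — 2 statements merged into one kernel-verified Lean document; each statement's English description precedes it below -/
import Mathlib

section
/- Let n ≥ 3, let ρ be a critical radius function on ℝⁿ and ω ∈ A_1^{ρ,∞}(ℝⁿ). Let E : (0,∞) × ℝⁿ × ℝⁿ → ℝ be a measurable family of kernels, written E_t(x,y), satisfying: (a) there is ε > 0 such that for every C' > 0 there is C with |E_t(x,y)| ≤ C (|x−y|/ρ(x))^ε |x−y|^{−n} for all t > 0 and all x ≠ y with |x−y| ≤ C'ρ(x); (b) for every N > 0 there is C_N with |E_t(x,y)| ≤ C_N t^N |x−y|^{−(N+n)} for all t > 0 and x ≠ y. Define E⁺_ρ(f)(x) = sup_{0<t<ρ(x)} |∫_{ℝⁿ} E_t(x,y) f(y) dy|. Then there exists a positive constant C such that ‖E⁺_ρ(f)‖_{L¹_ω(ℝⁿ)} ≤ C ‖f‖_{L¹_ω(ℝⁿ)} for all f ∈ L¹_ω(ℝⁿ). (In the paper E_t(x,y) = T_{t²}(x,y) − T̃_{t²}(x,y), the difference of the Schrödinger heat kernel and the Gaussian kernel, which satisfies (a) and (b).) -/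
open MeasureTheory Metric Set Filter
open scoped ENNReal NNReal BigOperators Topology

noncomputable section

abbrev Eu (n : ℕ) := EuclideanSpace ℝ (Fin n)

variable {n : ℕ}

/-- A critical radius function with constants `C₀ ≥ 1`, `k₀ ≥ 1`. -/
def IsCriticalRadius (n : ℕ) (ρ : Eu n → ℝ) (C₀ k₀ : ℝ) : Prop :=
  Continuous ρ ∧ (∀ x, 0 < ρ x) ∧ 1 ≤ C₀ ∧ 1 ≤ k₀ ∧
    ∀ x y : Eu n,
      C₀⁻¹ * ρ x * (1 + dist x y / ρ x) ^ (-k₀) ≤ ρ y ∧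
      ρ y ≤ C₀ * ρ x * (1 + dist x y / ρ x) ^ (k₀ / (k₀ + 1))

/-- `Ψ_θ(B(x₀,r)) = (1+r/ρ(x₀))^θ`. -/
def PsiTheta (ρ : Eu n → ℝ) (θ : ℝ) (x₀ : Eu n) (r : ℝ) : ℝ := (1 + r / ρ x₀) ^ θ

/-- The weight class `A_p^{ρ,θ}(ℝⁿ)` (for `p = 1` via the maximal-function condition,
for `1 < p` via the usual Muckenhoupt-type condition with the factor `Ψ_θ`). -/
def MemApRho (ρ : Eu n → ℝ) (θ p : ℝ) (ω : Eu n → ℝ) : Prop :=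
  (∀ x, 0 < ω x) ∧ LocallyIntegrable ω volume ∧
  ((p = 1 ∧ ∃ C > 0, ∀ᵐ x ∂(volume : Measure (Eu n)), ∀ (x₀ : Eu n) (r : ℝ),
      0 < r → x ∈ ball x₀ r →
      (∫ y in ball x₀ r, ω y) ≤ C * (PsiTheta ρ θ x₀ r * (volume (ball x₀ r)).toReal) * ω x) ∨
   (1 < p ∧ ∃ C > 0, ∀ (x₀ : Eu n) (r : ℝ), 0 < r →
      ((PsiTheta ρ θ x₀ r * (volume (ball x₀ r)).toReal)⁻¹ * ∫ y in ball x₀ r, ω y) *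
      ((PsiTheta ρ θ x₀ r * (volume (ball x₀ r)).toReal)⁻¹ *
        ∫ y in ball x₀ r, ω y ^ (-(1 / (p - 1)))) ^ (p - 1) ≤ C))

/-- `A_p^{ρ,∞} = ⋃_{θ ≥ 0} A_p^{ρ,θ}`. -/
def MemApRhoInf (ρ : Eu n → ℝ) (p : ℝ) (ω : Eu n → ℝ) : Prop :=
  ∃ θ ≥ (0 : ℝ), MemApRho ρ θ p ω

/-- `A_∞^{ρ,∞} = ⋃_{p ≥ 1} A_p^{ρ,∞}`. -/
def MemAInf (ρ : Eu n → ℝ) (ω : Eu n → ℝ) : Prop := ∃ p, 1 ≤ p ∧ MemApRhoInf ρ p ω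

/-- critical index `q_ω`. -/
def qIndex (ρ : Eu n → ℝ) (ω : Eu n → ℝ) : ℝ := sInf {p | 1 ≤ p ∧ MemApRhoInf ρ p ω}

/-- the measure `ω dx`. -/
def wMeasure (ω : Eu n → ℝ) : Measure (Eu n) :=
  volume.withDensity fun x => ENNReal.ofReal (ω x)

/-- weighted `L^p` quasi-norm of an `ℝ≥0∞`-valued function. -/
def wNorm (p : ℝ) (ω : Eu n → ℝ) (g : Eu n → ℝ≥0∞) : ℝ≥0∞ :=
  (∫⁻ x, g x ^ p ∂(wMeasure ω)) ^ (1 / p)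

/-- the (closed) cube `Q(x,r)` with center `x` and sidelength `r`. -/
def cube (x : Eu n) (r : ℝ) : Set (Eu n) := {y | ∀ i, |y i - x i| ≤ r / 2}

/-- the test class `D_{N,R}`. -/
def TestN (n : ℕ) (N : ℕ) (R : ℝ) (φ : Eu n → ℝ) : Prop :=
  ContDiff ℝ (⊤ : ℕ∞) φ ∧ tsupport φ ⊆ ball (0 : Eu n) R ∧
    ∀ k : ℕ, k ≤ N → ∀ x, ‖iteratedFDeriv ℝ k φ x‖ ≤ 1

/-- `φ_l(x) = 2^{ln} φ(2^l x)`. -/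
def dil (φ : Eu n → ℝ) (l : ℤ) (x : Eu n) : ℝ :=
  (2 : ℝ) ^ (l * (n : ℤ)) * φ ((2 : ℝ) ^ l • x)

/-- `f : (test functions) → ℝ` is a distribution (modelled as a linear functional). -/
def IsDistrib (n : ℕ) (f : (Eu n → ℝ) → ℝ) : Prop :=
  (∀ φ ψ : Eu n → ℝ, f (φ + ψ) = f φ + f ψ) ∧
    ∀ (c : ℝ) (φ : Eu n → ℝ), f (c • φ) = c * f φ

/-- `(f * φ)(x) = ⟨f, φ(x - ·)⟩`. -/
def dconv (f : (Eu n → ℝ) → ℝ) (φ : Eu n → ℝ) (x : Eu n) : ℝ := f fun y => φ (x - y)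

/-- a locally integrable function viewed as a distribution. -/
def toDistrib (g : Eu n → ℝ) : (Eu n → ℝ) → ℝ := fun φ => ∫ y, g y * φ y

/-- the local vertical grand maximal function `M_{N,R} f`. -/
def gMax (ρ : Eu n → ℝ) (N : ℕ) (R : ℝ) (f : (Eu n → ℝ) → ℝ) (x : Eu n) : ℝ≥0∞ :=
  ⨆ (φ : Eu n → ℝ) (_ : TestN n N R φ) (l : ℤ) (_ : (2 : ℝ) ^ (-l) < ρ x),
    ENNReal.ofReal |dconv f (dil φ l) x|

/-- the local nontangential grand maximal function `M̃_{N,R} f`. -/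
def gMaxNT (ρ : Eu n → ℝ) (N : ℕ) (R : ℝ) (f : (Eu n → ℝ) → ℝ) (x : Eu n) : ℝ≥0∞ :=
  ⨆ (φ : Eu n → ℝ) (_ : TestN n N R φ) (l : ℤ) (z : Eu n)
    (_ : dist x z < (2 : ℝ) ^ (-l) ∧ (2 : ℝ) ^ (-l) < ρ x),
    ENNReal.ofReal |dconv f (dil φ l) z|

/-- the quasi-norm of the weighted local Hardy space `h^p_{ρ,N}(ω)` (with parameter `R`). -/
def hNorm (ρ : Eu n → ℝ) (N : ℕ) (R : ℝ) (p : ℝ) (ω : Eu n → ℝ)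
    (f : (Eu n → ℝ) → ℝ) : ℝ≥0∞ :=
  wNorm p ω (gMax ρ N R f)

/-- `m_{j,A,B,x}(y) = (1+2^j|y|)^A 2^{B|y|/ρ(x)}`. -/
def mWeight (ρ : Eu n → ℝ) (j : ℤ) (A B : ℝ) (x y : Eu n) : ℝ :=
  (1 + (2 : ℝ) ^ j * ‖y‖) ^ A * (2 : ℝ) ^ (B * ‖y‖ / ρ x)

/-- local vertical maximal function `ψ⁺(f)`. -/
def vertMax (ρ : Eu n → ℝ) (ψ : Eu n → ℝ) (f : (Eu n → ℝ) → ℝ) (x : Eu n) : ℝ≥0∞ :=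
  ⨆ (j : ℤ) (_ : (2 : ℝ) ^ (-j) < ρ x), ENNReal.ofReal |dconv f (dil ψ j) x|

/-- local tangential Peetre-type maximal function `ψ**_{A,B}(f)`. -/
def tangMax (ρ : Eu n → ℝ) (ψ : Eu n → ℝ) (A B : ℝ) (f : (Eu n → ℝ) → ℝ) (x : Eu n) : ℝ≥0∞ :=
  ⨆ (j : ℤ) (_ : (2 : ℝ) ^ (-j) < ρ x) (y : Eu n),
    ENNReal.ofReal (|dconv f (dil ψ j) (x - y)| / mWeight ρ j A B x y)

/-- local nontangential maximal function `ψ*_∇(f)`. -/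
def ntMax (ρ : Eu n → ℝ) (ψ : Eu n → ℝ) (f : (Eu n → ℝ) → ℝ) (x : Eu n) : ℝ≥0∞ :=
  ⨆ (l : ℤ) (y : Eu n) (_ : dist x y < (2 : ℝ) ^ (-l) ∧ (2 : ℝ) ^ (-l) < ρ x),
    ENNReal.ofReal |dconv f (dil ψ l) y|

/-- the Peetre maximal function at a single scale `j`. -/
def peetreJ (ρ : Eu n → ℝ) (ψ : Eu n → ℝ) (j : ℤ) (A B : ℝ) (f : (Eu n → ℝ) → ℝ)
    (x : Eu n) : ℝ≥0∞ :=
  ⨆ y : Eu n, ENNReal.ofReal (|dconv f (dil ψ j) (x - y)| / mWeight ρ j A B x y)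

/-- the local Hardy–Littlewood maximal operator. -/
def Mloc (ρ : Eu n → ℝ) (g : Eu n → ℝ) (x : Eu n) : ℝ≥0∞ :=
  ⨆ (x₀ : Eu n) (r : ℝ) (_ : 0 < r ∧ r ≤ ρ x₀ ∧ x ∈ ball x₀ r),
    (volume (ball x₀ r))⁻¹ * ∫⁻ y in ball x₀ r, ENNReal.ofReal |g y|

/-- the operator `K_B g(x) = ρ(x)^{-n} ∫ |g(y)| 2^{-B|x-y|/ρ(x)} dy`. -/
def KBop (ρ : Eu n → ℝ) (B : ℝ) (g : Eu n → ℝ) (x : Eu n) : ℝ≥0∞ :=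
  ENNReal.ofReal ((ρ x) ^ (-(n : ℝ))) *
    ∫⁻ y, ENNReal.ofReal (|g y| * (2 : ℝ) ^ (-(B * dist x y / ρ x)))

/-- `L₁ = 4C₀(3√n)^{k₀}`. -/
def L1const (n : ℕ) (C₀ k₀ : ℝ) : ℝ := 4 * C₀ * (3 * Real.sqrt n) ^ k₀

/-- `L₂ = (C₀²(3√n)^{k₀+1})⁻¹`. -/
def L2const (n : ℕ) (C₀ k₀ : ℝ) : ℝ := (C₀ ^ (2 : ℕ) * (3 * Real.sqrt n) ^ (k₀ + 1))⁻¹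

/-- `a` is a `(p,q,s)_ω`-atom supported in the cube `Q(x,r)`. -/
def IsLocAtom (ρ : Eu n → ℝ) (C₀ k₀ : ℝ) (ω : Eu n → ℝ) (p : ℝ) (q : ℝ≥0∞) (s : ℕ)
    (a : Eu n → ℝ) (x : Eu n) (r : ℝ) : Prop :=
  0 < r ∧ r ≤ L1const n C₀ k₀ * ρ x ∧ Function.support a ⊆ cube x r ∧
  eLpNorm a q (wMeasure ω) ≤ wMeasure ω (cube x r) ^ (q⁻¹.toReal - 1 / p) ∧
  (r < L2const n C₀ k₀ * ρ x →
    ∀ α : Fin n → ℕ, (∑ i, α i) ≤ s → ∫ y, a y * ∏ i, (y i) ^ (α i) = 0)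

/-- `a` is a `(p,q)_ω`-single-atom. -/
def IsSingleAtom (ω : Eu n → ℝ) (p : ℝ) (q : ℝ≥0∞) (a : Eu n → ℝ) : Prop :=
  eLpNorm a q (wMeasure ω) ≤ wMeasure ω univ ^ (q⁻¹.toReal - 1 / p)

/-- an atomic decomposition `f = Σ λᵢ aᵢ` in `D'(ℝⁿ)`, `a 0` being the single-atom. -/
def IsLocAtomicDecomp (ρ : Eu n → ℝ) (C₀ k₀ : ℝ) (ω : Eu n → ℝ) (p : ℝ) (q : ℝ≥0∞) (s : ℕ)
    (f : (Eu n → ℝ) → ℝ) (lam : ℕ → ℝ) (a : ℕ → Eu n → ℝ) : Prop :=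
  IsSingleAtom ω p q (a 0) ∧
  (∀ i : ℕ, 1 ≤ i → ∃ x r, IsLocAtom ρ C₀ k₀ ω p q s (a i) x r) ∧
  ∀ φ : Eu n → ℝ, ContDiff ℝ (⊤ : ℕ∞) φ → HasCompactSupport φ →
    HasSum (fun i => lam i * ∫ y, a i y * φ y) (f φ)

/-- the atomic quasi-norm of `h^{p,q,s}_ρ(ω)`. -/
def atomicNorm (ρ : Eu n → ℝ) (C₀ k₀ : ℝ) (ω : Eu n → ℝ) (p : ℝ) (q : ℝ≥0∞) (s : ℕ)
    (f : (Eu n → ℝ) → ℝ) : ℝ≥0∞ :=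
  ⨅ (lam : ℕ → ℝ) (a : ℕ → Eu n → ℝ) (_ : IsLocAtomicDecomp ρ C₀ k₀ ω p q s f lam a),
    (∑' i, ENNReal.ofReal (|lam i| ^ p)) ^ (1 / p)

/-- a finite atomic decomposition `f = Σ_{i=0}^k λᵢ aᵢ` (pointwise). -/
def FinAtomicDecomp (ρ : Eu n → ℝ) (C₀ k₀ : ℝ) (ω : Eu n → ℝ) (p : ℝ) (q : ℝ≥0∞) (s : ℕ)
    (f : Eu n → ℝ) (k : ℕ) (lam : ℕ → ℝ) (a : ℕ → Eu n → ℝ) : Prop :=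
  IsSingleAtom ω p q (a 0) ∧
  (∀ i : ℕ, 1 ≤ i → i ≤ k → ∃ x r, IsLocAtom ρ C₀ k₀ ω p q s (a i) x r) ∧
  ∀ x, f x = ∑ i ∈ Finset.range (k + 1), lam i * a i x

/-- the quasi-norm of `h^{p,q,s}_{ρ,fin}(ω)`. -/
def finAtomicNorm (ρ : Eu n → ℝ) (C₀ k₀ : ℝ) (ω : Eu n → ℝ) (p : ℝ) (q : ℝ≥0∞) (s : ℕ)
    (f : Eu n → ℝ) : ℝ≥0∞ :=
  ⨅ (k : ℕ) (lam : ℕ → ℝ) (a : ℕ → Eu n → ℝ)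
    (_ : FinAtomicDecomp ρ C₀ k₀ ω p q s f k lam a),
    ENNReal.ofReal ((∑ i ∈ Finset.range (k + 1), |lam i| ^ p) ^ (1 / p))


set_option maxHeartbeats 1000000

/-- Lemma 7.6: `L¹_ω`-boundedness of the local maximal operator
associated to a family of kernels with the decay properties of
`E_t = T_{t²} - T̃_{t²}`. -/
theorem stmt16 (n : ℕ) (hn : 3 ≤ n) (ρ : Eu n → ℝ) (C₀ k₀ : ℝ)
    (hρ : IsCriticalRadius n ρ C₀ k₀)
    (ω : Eu n → ℝ) (hω : MemApRhoInf ρ 1 ω)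
    (E : ℝ → Eu n → Eu n → ℝ)
    (hEa : ∃ ε > (0 : ℝ), ∀ C' : ℝ, 0 < C' → ∃ C > (0 : ℝ),
      ∀ (t : ℝ) (x y : Eu n), 0 < t → x ≠ y → dist x y ≤ C' * ρ x →
        |E t x y| ≤ C * (dist x y / ρ x) ^ ε * dist x y ^ (-(n : ℝ)))
    (hEb : ∀ N : ℝ, 0 < N → ∃ C > (0 : ℝ),
      ∀ (t : ℝ) (x y : Eu n), 0 < t → x ≠ y →
        |E t x y| ≤ C * t ^ N * dist x y ^ (-(N + n))) :
    ∃ C > (0 : ℝ), ∀ f : Eu n → ℝ, Integrable f (wMeasure ω) →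
      ∫⁻ x, (⨆ (t : ℝ) (_ : 0 < t ∧ t < ρ x),
          ENNReal.ofReal |∫ y, E t x y * f y|) ∂(wMeasure ω) ≤
        ENNReal.ofReal C * ∫⁻ x, ENNReal.ofReal |f x| ∂(wMeasure ω) := by
  classical
  haveI : Nontrivial (Eu n) := by
    have h : 0 < Module.finrank ℝ (Eu n) := by
      simp only [finrank_euclideanSpace, Fintype.card_fin]; omega
    exact Module.nontrivial_of_finrank_pos h
  obtain ⟨hρc, hρpos, hC₀, hk₀, hcr⟩ := hρ
  obtain ⟨θ, hθ0, hωpos, hωloc, hdisj⟩ := hω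
  obtain ⟨-, Cw, hCw, hA1⟩ := hdisj.resolve_right (fun h => absurd h.1 (lt_irrefl 1))
  have hC₀pos : (0:ℝ) < C₀ := lt_of_lt_of_le one_pos hC₀
  obtain ⟨ε₀, hε₀, hEaC⟩ := hEa
  obtain ⟨C₁, hC₁, hnear⟩ := hEaC 1 one_pos
  set α : ℝ := k₀ / (k₀ + 1) with hαdef
  have hk₀1 : (0:ℝ) < k₀ + 1 := by linarith
  have hα0 : 0 ≤ α := by positivity
  have hα1 : α ≤ 1 := by rw [hαdef, div_le_one hk₀1]; linarith
  have h1mα : (1 - α) * (k₀ + 1) = 1 := by rw [hαdef]; field_simp; ring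
  set ε : ℝ := min ε₀ 1 with hεdef
  have hεpos : 0 < ε := lt_min hε₀ one_pos
  have hε1 : ε ≤ 1 := min_le_right _ _
  have hn3 : (3:ℝ) ≤ (n:ℝ) := by exact_mod_cast hn
  set M : ℝ := θ + n + 1 with hMdef
  have hMpos : 0 < M := by rw [hMdef]; linarith
  set Nn : ℝ := (k₀ + 1) * M with hNdef
  have hNpos : 0 < Nn := mul_pos hk₀1 hMpos
  obtain ⟨C₂, hC₂, hfar⟩ := hEb Nn hNpos
  set C₃ : ℝ := (2*C₀) ^ (k₀+1) with hC₃def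
  have hC₃1 : 1 ≤ C₃ := Real.one_le_rpow (by linarith) (by linarith)
  have hC₃pos : 0 < C₃ := lt_of_lt_of_le one_pos hC₃1
  set G : Eu n → ℝ → ℝ := fun z d =>
    if d ≤ C₃ * ρ z then (ρ z) ^ (-ε) * d ^ (ε - (n:ℝ)) else (ρ z) ^ M * d ^ (-(M + (n:ℝ)))
    with hGdef
  have hGnn : ∀ (z : Eu n) (d : ℝ), 0 ≤ d → 0 ≤ G z d := by
    intro z d hd
    rw [hGdef]; dsimp only
    split <;> exact mul_nonneg (Real.rpow_nonneg (hρpos z).le _) (Real.rpow_nonneg hd _)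
  have hup : ∀ x z : Eu n, ρ x ≤ C₀ * ρ z * (1 + dist x z / ρ z) ^ α := by
    intro x z; have h := (hcr z x).2; rwa [dist_comm z x] at h
  have hlow : ∀ x z : Eu n, C₀⁻¹ * ρ z * (1 + dist x z / ρ z) ^ (-k₀) ≤ ρ x := by
    intro x z; have h := (hcr z x).1; rwa [dist_comm z x] at h
  -- if d ≤ ρ x then d ≤ C₃ * ρ z
  have key_dC3 : ∀ x z : Eu n, dist x z ≤ ρ x → dist x z ≤ C₃ * ρ z := by
    intro x z hdx
    have hρz := hρpos z
    rcases le_or_gt (dist x z) (ρ z) with h | h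
    · exact h.trans (le_mul_of_one_le_left hρz.le hC₃1)
    · have hu1 : 1 < dist x z / ρ z := (one_lt_div hρz).2 h
      have hu0 : 0 < dist x z / ρ z := by linarith
      have h2u : 1 + dist x z / ρ z ≤ 2 * (dist x z / ρ z) := by linarith
      have hupen : (1 + dist x z / ρ z) ^ α ≤ (2 * (dist x z / ρ z)) ^ α :=
        Real.rpow_le_rpow (by positivity) h2u hα0
      have hd' : dist x z ≤ C₀ * ρ z * (2 * (dist x z / ρ z)) ^ α := by
        refine hdx.trans ((hup x z).trans ?_)
        exact mul_le_mul_of_nonneg_left hupen (by positivity)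
      have hstep : dist x z / ρ z ≤ C₀ * (2 * (dist x z / ρ z)) ^ α := by
        rw [div_le_iff₀ hρz]
        calc dist x z ≤ C₀ * ρ z * (2 * (dist x z / ρ z)) ^ α := hd'
          _ = C₀ * (2 * (dist x z / ρ z)) ^ α * ρ z := by ring
      have hcancel : (dist x z / ρ z) ^ α * (dist x z / ρ z) ^ (1 - α) = dist x z / ρ z := by
        rw [← Real.rpow_add hu0, show α + (1 - α) = 1 from by ring, Real.rpow_one]
      have h2a : (2:ℝ) ^ α ≤ 2 := by
        calc (2:ℝ)^α ≤ (2:ℝ)^(1:ℝ) := Real.rpow_le_rpow_of_exponent_le one_le_two hα1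
          _ = 2 := Real.rpow_one 2
      have hsplit2 : (2 * (dist x z / ρ z)) ^ α = 2 ^ α * (dist x z / ρ z) ^ α :=
        Real.mul_rpow (by norm_num) hu0.le
      have huα : 0 < (dist x z / ρ z) ^ α := Real.rpow_pos_of_pos hu0 α
      have hfrac : (dist x z / ρ z) ^ (1 - α) ≤ 2 * C₀ := by
        have h5 : (dist x z / ρ z) ^ α * (dist x z / ρ z) ^ (1-α) ≤
            (2 * C₀) * (dist x z / ρ z) ^ α := by
          rw [hcancel]
          calc dist x z / ρ z ≤ C₀ * (2*(dist x z / ρ z))^α := hstep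
            _ = C₀ * (2^α * (dist x z / ρ z)^α) := by rw [hsplit2]
            _ ≤ C₀ * (2 * (dist x z / ρ z)^α) := by
                refine mul_le_mul_of_nonneg_left ?_ hC₀pos.le
                exact mul_le_mul_of_nonneg_right h2a huα.le
            _ = (2 * C₀) * (dist x z / ρ z) ^ α := by ring
        have h5' : (dist x z / ρ z) ^ α * (dist x z / ρ z) ^ (1-α) ≤
            (dist x z / ρ z) ^ α * (2 * C₀) := by linarith
        exact le_of_mul_le_mul_left h5' huα
      have hu_le : dist x z / ρ z ≤ C₃ := by
        have h6 : dist x z / ρ z = ((dist x z / ρ z) ^ (1-α)) ^ (k₀+1) := by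
          rw [← Real.rpow_mul hu0.le, h1mα, Real.rpow_one]
        rw [h6, hC₃def]
        exact Real.rpow_le_rpow (Real.rpow_nonneg hu0.le _) hfrac (by linarith)
      calc dist x z = (dist x z / ρ z) * ρ z := by field_simp
        _ ≤ C₃ * ρ z := mul_le_mul_of_nonneg_right hu_le hρz.le
  -- splitting rpow identity
  have hpowsplit : ∀ d r : ℝ, 0 < d → 0 < r →
      (d / r) ^ ε * d ^ (-(n:ℝ)) = r ^ (-ε) * d ^ (ε - (n:ℝ)) := by
    intro d r hd hr
    rw [Real.div_rpow hd.le hr.le, div_eq_mul_inv, ← Real.rpow_neg hr.le,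
      show ε - (n:ℝ) = ε + (-(n:ℝ)) by ring, Real.rpow_add hd]
    ring
  -- the kernel estimate
  obtain ⟨A, hApos, hker⟩ : ∃ A > (0:ℝ), ∀ (t : ℝ) (x z : Eu n), 0 < t → t < ρ x → x ≠ z →
      |E t x z| ≤ A * G z (dist x z) := by
    set L : ℝ := C₀ * (2*C₃) ^ k₀ with hLdef
    have h2C₃ : (1:ℝ) ≤ 2*C₃ := by linarith
    have hLaux : (1:ℝ) ≤ (2*C₃) ^ k₀ := Real.one_le_rpow h2C₃ (by linarith)
    have hL1 : 1 ≤ L := by rw [hLdef]; nlinarith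
    have hLpos : 0 < L := by linarith
    set A1 : ℝ := 2*C₀*C₁ with hA1def
    set A2 : ℝ := C₂ * (2*C₀*C₃)^Nn * L^Nn * L with hA2def
    set A3 : ℝ := C₂ * (2*C₀)^Nn with hA3def
    have hA1p : 0 < A1 := by rw [hA1def]; positivity
    have hA2p : 0 < A2 := by
      rw [hA2def]
      have h1 := Real.rpow_pos_of_pos (show (0:ℝ) < 2*C₀*C₃ by positivity) Nn
      have h2 := Real.rpow_pos_of_pos hLpos Nn
      positivity
    have hA3p : 0 < A3 := by
      rw [hA3def]
      have h1 := Real.rpow_pos_of_pos (show (0:ℝ) < 2*C₀ by positivity) Nn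
      positivity
    refine ⟨A1 + A2 + A3, by positivity, ?_⟩
    intro t x z ht0 htρ hxz
    have hd : 0 < dist x z := dist_pos.2 hxz
    have hρx := hρpos x
    have hρz := hρpos z
    have hGnnd := hGnn z (dist x z) hd.le
    rcases le_or_gt (dist x z) (ρ x) with hcase | hcase
    · -- near case
      have hbr : dist x z ≤ C₃ * ρ z := key_dC3 x z hcase
      have hq0 : 0 < dist x z / ρ x := div_pos hd hρx
      have hq1 : dist x z / ρ x ≤ 1 := (div_le_one hρx).2 hcase
      have hE := hnear t x z ht0 hxz (by rw [one_mul]; exact hcase)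
      have s1 : (dist x z / ρ x) ^ ε₀ ≤ (dist x z / ρ x) ^ ε :=
        Real.rpow_le_rpow_of_exponent_ge hq0 hq1 (min_le_left _ _)
      have s2 : (dist x z / ρ x) ^ ε ≤ 2*C₀ * ((dist x z / ρ z) ^ ε) := by
        have hρzx : ρ z ≤ 2*C₀*ρ x := by
          have h1 : (1 + dist x z / ρ x) ^ α ≤ 2 := by
            calc (1 + dist x z / ρ x) ^ α ≤ (2:ℝ) ^ α :=
                  Real.rpow_le_rpow (by positivity) (by linarith) hα0
              _ ≤ (2:ℝ)^(1:ℝ) := Real.rpow_le_rpow_of_exponent_le one_le_two hα1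
              _ = 2 := Real.rpow_one 2
          have h2 := (hcr x z).2
          have h2' := mul_le_mul_of_nonneg_left h1 (show (0:ℝ) ≤ C₀ * ρ x by positivity)
          calc ρ z ≤ C₀ * ρ x * (1 + dist x z / ρ x) ^ α := h2
            _ ≤ C₀ * ρ x * 2 := h2'
            _ = 2*C₀*ρ x := by ring
        have hbase : dist x z / ρ x ≤ (2*C₀) * (dist x z / ρ z) := by
          rw [div_le_iff₀ hρx]
          have h9 : (2*C₀) * (dist x z / ρ z) * ρ x = (2*C₀*ρ x) * dist x z / ρ z := by
            ring
          rw [h9, le_div_iff₀ hρz]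
          nlinarith [hd.le]
        calc (dist x z / ρ x) ^ ε ≤ ((2*C₀) * (dist x z / ρ z)) ^ ε :=
              Real.rpow_le_rpow hq0.le hbase hεpos.le
          _ = (2*C₀)^ε * (dist x z / ρ z)^ε := Real.mul_rpow (by linarith) (by positivity)
          _ ≤ (2*C₀) * (dist x z / ρ z)^ε := by
              have h2 : (2*C₀)^ε ≤ (2*C₀)^(1:ℝ) :=
                Real.rpow_le_rpow_of_exponent_le (by linarith) hε1
              rw [Real.rpow_one] at h2
              exact mul_le_mul_of_nonneg_right h2 (Real.rpow_nonneg (by positivity) _)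
      have hfinal : |E t x z| ≤ A1 * (ρ z ^ (-ε) * dist x z ^ (ε - (n:ℝ))) := by
        have hdn : (0:ℝ) ≤ dist x z ^ (-(n:ℝ)) := Real.rpow_nonneg hd.le _
        calc |E t x z| ≤ C₁ * (dist x z / ρ x)^ε₀ * dist x z ^ (-(n:ℝ)) := hE
          _ ≤ C₁ * (2*C₀ * (dist x z / ρ z)^ε) * dist x z ^ (-(n:ℝ)) := by
              have h7 := s1.trans s2
              have h8 := mul_le_mul_of_nonneg_right
                (mul_le_mul_of_nonneg_left h7 hC₁.le) hdn
              linarith [h8]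
          _ = A1 * ((dist x z / ρ z)^ε * dist x z ^ (-(n:ℝ))) := by rw [hA1def]; ring
          _ = A1 * (ρ z ^ (-ε) * dist x z ^ (ε - (n:ℝ))) := by rw [hpowsplit _ _ hd hρz]
      have hGeq : G z (dist x z) = ρ z ^ (-ε) * dist x z ^ (ε - (n:ℝ)) := by
        rw [hGdef]; dsimp only; rw [if_pos hbr]
      rw [hGeq]
      have hXnn : (0:ℝ) ≤ ρ z ^ (-ε) * dist x z ^ (ε - (n:ℝ)) := by
        rw [← hGeq]; exact hGnnd
      calc |E t x z| ≤ A1 * (ρ z ^ (-ε) * dist x z ^ (ε - (n:ℝ))) := hfinal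
        _ ≤ (A1+A2+A3) * (ρ z ^ (-ε) * dist x z ^ (ε - (n:ℝ))) :=
            mul_le_mul_of_nonneg_right (by linarith) hXnn
    · -- far case
      have hE := hfar t x z ht0 hxz
      have htN : t ^ Nn ≤ ρ x ^ Nn := Real.rpow_le_rpow ht0.le htρ.le hNpos.le
      have hdNn : (0:ℝ) ≤ dist x z ^ (-(Nn + (n:ℝ))) := Real.rpow_nonneg hd.le _
      have hE2 : |E t x z| ≤ C₂ * ρ x ^ Nn * dist x z ^ (-(Nn+(n:ℝ))) := by
        calc |E t x z| ≤ C₂ * t ^ Nn * dist x z ^ (-(Nn+(n:ℝ))) := hE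
          _ ≤ C₂ * ρ x ^ Nn * dist x z ^ (-(Nn+(n:ℝ))) :=
              mul_le_mul_of_nonneg_right (mul_le_mul_of_nonneg_left htN hC₂.le) hdNn
      rcases le_or_gt (dist x z) (C₃ * ρ z) with hbr | hbr
      · -- middle subcase
        have hdρz : dist x z / ρ z ≤ C₃ := (div_le_iff₀ hρz).2 (by linarith)
        have h1 : 1 + dist x z / ρ z ≤ 2*C₃ := by
          have := div_nonneg hd.le hρz.le
          linarith
        have hupx : ρ x ≤ (2*C₀*C₃) * ρ z := by
          have h2 : (1 + dist x z / ρ z) ^ α ≤ 2*C₃ := by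
            calc (1 + dist x z / ρ z) ^ α ≤ (2*C₃)^α :=
                  Real.rpow_le_rpow (by positivity) h1 hα0
              _ ≤ (2*C₃)^(1:ℝ) := Real.rpow_le_rpow_of_exponent_le h2C₃ hα1
              _ = 2*C₃ := Real.rpow_one _
          have h3 := hup x z
          have h3' := mul_le_mul_of_nonneg_left h2 (show (0:ℝ) ≤ C₀ * ρ z by positivity)
          calc ρ x ≤ C₀ * ρ z * (1 + dist x z / ρ z) ^ α := h3
            _ ≤ C₀ * ρ z * (2*C₃) := h3'
            _ = (2*C₀*C₃) * ρ z := by ring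
        have hlz : ρ z ≤ L * ρ x := by
          have hbm : (2*C₃:ℝ)^(-k₀) ≤ (1 + dist x z / ρ z) ^ (-k₀) :=
            Real.rpow_le_rpow_of_nonpos (by positivity) h1 (by linarith)
          have h4 : C₀⁻¹ * ρ z * (2*C₃)^(-k₀) ≤ ρ x := by
            refine le_trans ?_ (hlow x z)
            exact mul_le_mul_of_nonneg_left hbm (by positivity)
          rw [Real.rpow_neg (by positivity : (0:ℝ) ≤ 2*C₃)] at h4
          have hpk : 0 < (2*C₃)^k₀ := Real.rpow_pos_of_pos (by positivity) _
          rw [hLdef]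
          calc ρ z = C₀ * (2*C₃)^k₀ * (C₀⁻¹ * ρ z * ((2*C₃)^k₀)⁻¹) := by
                field_simp
            _ ≤ C₀*(2*C₃)^k₀ * ρ x := mul_le_mul_of_nonneg_left h4 (by positivity)
        have hzd : ρ z ≤ L * dist x z := by
          calc ρ z ≤ L * ρ x := hlz
            _ ≤ L * dist x z := mul_le_mul_of_nonneg_left hcase.le hLpos.le
        have b1 : ρ x ^ Nn ≤ (2*C₀*C₃)^Nn * ρ z ^ Nn := by
          calc ρ x ^ Nn ≤ ((2*C₀*C₃) * ρ z)^Nn := Real.rpow_le_rpow hρx.le hupx hNpos.le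
            _ = (2*C₀*C₃)^Nn * ρ z ^ Nn := Real.mul_rpow (by positivity) hρz.le
        have b2 : ρ z ^ Nn * dist x z ^ (-Nn) ≤ L ^ Nn := by
          have h5 : ρ z ^ Nn ≤ L^Nn * dist x z ^ Nn := by
            have h6 := Real.rpow_le_rpow hρz.le hzd hNpos.le
            rwa [Real.mul_rpow hLpos.le hd.le] at h6
          rw [Real.rpow_neg hd.le]
          have hdN : 0 < dist x z ^ Nn := Real.rpow_pos_of_pos hd _
          rw [mul_inv_le_iff₀ hdN]
          exact h5
        have b3 : dist x z ^ (-(Nn + (n:ℝ))) = dist x z ^ (-Nn) * dist x z ^ (-(n:ℝ)) := by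
          rw [← Real.rpow_add hd]; congr 1; ring
        have b4 : dist x z ^ (-(n:ℝ)) ≤ L * (ρ z ^(-ε) * dist x z ^ (ε - (n:ℝ))) := by
          rw [← hpowsplit _ _ hd hρz]
          have h6 : (L:ℝ)⁻¹ ≤ dist x z / ρ z := by
            rw [le_div_iff₀ hρz, inv_mul_le_iff₀ hLpos]
            exact hzd
          have h7 : ((L:ℝ)⁻¹) ^ ε ≤ (dist x z / ρ z)^ε :=
            Real.rpow_le_rpow (by positivity) h6 hεpos.le
          have h8 : (L:ℝ)⁻¹ ≤ (L⁻¹) ^ ε := by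
            have h9 := Real.rpow_le_rpow_of_exponent_ge (show (0:ℝ) < L⁻¹ by positivity)
              (by rw [inv_le_one₀ hLpos]; exact hL1) hε1
            rwa [Real.rpow_one] at h9
          have h5 : (1:ℝ) ≤ L * (dist x z / ρ z)^ε := by
            calc (1:ℝ) = L * L⁻¹ := by field_simp
              _ ≤ L * (dist x z / ρ z)^ε :=
                  mul_le_mul_of_nonneg_left (h8.trans h7) hLpos.le
          have hdn : (0:ℝ) ≤ dist x z ^ (-(n:ℝ)) := Real.rpow_nonneg hd.le _
          calc dist x z ^ (-(n:ℝ)) = 1 * dist x z ^ (-(n:ℝ)) := (one_mul _).symm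
            _ ≤ (L * (dist x z / ρ z)^ε) * dist x z ^ (-(n:ℝ)) :=
                mul_le_mul_of_nonneg_right h5 hdn
            _ = L * ((dist x z / ρ z)^ε * dist x z ^ (-(n:ℝ))) := by ring
        have hGeq : G z (dist x z) = ρ z ^ (-ε) * dist x z ^ (ε - (n:ℝ)) := by
          rw [hGdef]; dsimp only; rw [if_pos hbr]
        rw [hGeq]
        have hXnn : (0:ℝ) ≤ ρ z ^ (-ε) * dist x z ^ (ε - (n:ℝ)) := by
          rw [← hGeq]; exact hGnnd
        have hdnn : (0:ℝ) ≤ dist x z ^ (-(n:ℝ)) := Real.rpow_nonneg hd.le _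
        have hfin2 : |E t x z| ≤ A2 * (ρ z ^ (-ε) * dist x z ^ (ε - (n:ℝ))) := by
          have hpos1 : (0:ℝ) ≤ (2*C₀*C₃)^Nn := Real.rpow_nonneg (by positivity) _
          have hpos2 : (0:ℝ) ≤ L^Nn := Real.rpow_nonneg hLpos.le _
          calc |E t x z| ≤ C₂ * ρ x ^ Nn * dist x z ^ (-(Nn+(n:ℝ))) := hE2
            _ = C₂ * (ρ x ^ Nn * dist x z ^ (-Nn)) * dist x z ^ (-(n:ℝ)) := by rw [b3]; ring
            _ ≤ C₂ * ((2*C₀*C₃)^Nn * ρ z ^ Nn * dist x z ^ (-Nn)) * dist x z ^ (-(n:ℝ)) := by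
                have hb1' : ρ x ^ Nn * dist x z ^ (-Nn) ≤
                    (2*C₀*C₃)^Nn * ρ z ^ Nn * dist x z ^ (-Nn) :=
                  mul_le_mul_of_nonneg_right b1 (Real.rpow_nonneg hd.le (-Nn))
                exact mul_le_mul_of_nonneg_right (mul_le_mul_of_nonneg_left hb1' hC₂.le) hdnn
            _ ≤ C₂ * ((2*C₀*C₃)^Nn * L^Nn) * dist x z ^ (-(n:ℝ)) := by
                refine mul_le_mul_of_nonneg_right (mul_le_mul_of_nonneg_left ?_ hC₂.le) hdnn
                calc (2*C₀*C₃)^Nn * ρ z ^ Nn * dist x z ^ (-Nn)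
                    = (2*C₀*C₃)^Nn * (ρ z ^ Nn * dist x z ^ (-Nn)) := by ring
                  _ ≤ (2*C₀*C₃)^Nn * L^Nn := mul_le_mul_of_nonneg_left b2 hpos1
            _ ≤ C₂ * ((2*C₀*C₃)^Nn * L^Nn) * (L * (ρ z ^(-ε) * dist x z ^ (ε - (n:ℝ)))) := by
                refine mul_le_mul_of_nonneg_left b4 ?_
                positivity
            _ = A2 * (ρ z ^ (-ε) * dist x z ^ (ε - (n:ℝ))) := by rw [hA2def]; ring
        calc |E t x z| ≤ A2 * (ρ z ^ (-ε) * dist x z ^ (ε - (n:ℝ))) := hfin2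
          _ ≤ (A1+A2+A3) * (ρ z ^ (-ε) * dist x z ^ (ε - (n:ℝ))) :=
              mul_le_mul_of_nonneg_right (by linarith) hXnn
      · -- outer subcase
        have hone : 1 ≤ dist x z / ρ z := by
          rw [le_div_iff₀ hρz]
          have := le_mul_of_one_le_left hρz.le hC₃1
          linarith
        have h2d : 1 + dist x z / ρ z ≤ 2 * (dist x z / ρ z) := by linarith
        have h2a : (2:ℝ) ^ α ≤ 2 := by
          calc (2:ℝ)^α ≤ (2:ℝ)^(1:ℝ) := Real.rpow_le_rpow_of_exponent_le one_le_two hα1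
            _ = 2 := Real.rpow_one 2
        have hupx : ρ x ≤ 2*C₀ * (ρ z ^ (1-α) * dist x z ^ α) := by
          have h3 := hup x z
          have h4 : (1 + dist x z / ρ z)^α ≤ 2 * (dist x z / ρ z)^α := by
            calc (1 + dist x z / ρ z)^α ≤ (2*(dist x z / ρ z))^α :=
                  Real.rpow_le_rpow (by positivity) h2d hα0
              _ = 2^α * (dist x z / ρ z)^α := Real.mul_rpow (by norm_num) (by positivity)
              _ ≤ 2 * (dist x z / ρ z)^α :=
                  mul_le_mul_of_nonneg_right h2a (Real.rpow_nonneg (by positivity) _)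
          have h5 : ρ z * (dist x z / ρ z)^α = ρ z ^(1-α) * dist x z ^ α := by
            rw [Real.div_rpow hd.le hρz.le,
              show (1:ℝ)-α = 1 + (-α) by ring, Real.rpow_add hρz, Real.rpow_one,
              Real.rpow_neg hρz.le]
            rw [div_eq_mul_inv]
            ring
          have h6 : C₀ * ρ z * (1 + dist x z / ρ z)^α ≤ C₀ * ρ z * (2 * (dist x z / ρ z)^α) :=
            mul_le_mul_of_nonneg_left h4 (by positivity)
          calc ρ x ≤ C₀ * ρ z * (1 + dist x z / ρ z)^α := h3
            _ ≤ C₀ * ρ z * (2 * (dist x z / ρ z)^α) := h6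
            _ = 2*C₀ * (ρ z * (dist x z / ρ z)^α) := by ring
            _ = 2*C₀ * (ρ z ^(1-α) * dist x z ^ α) := by rw [h5]
        have hexp1 : (1-α) * Nn = M := by
          rw [hNdef]
          calc (1-α) * ((k₀+1)*M) = ((1-α)*(k₀+1))*M := by ring
            _ = M := by rw [h1mα]; ring
        have hexp2 : α * Nn = Nn - M := by rw [← hexp1]; ring
        have b1 : ρ x ^ Nn ≤ (2*C₀)^Nn * (ρ z ^ M * dist x z ^ (Nn - M)) := by
          calc ρ x ^ Nn ≤ (2*C₀ * (ρ z ^ (1-α) * dist x z ^ α))^Nn :=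
                Real.rpow_le_rpow hρx.le hupx hNpos.le
            _ = (2*C₀)^Nn * (ρ z ^ (1-α) * dist x z ^ α)^Nn := by
                rw [Real.mul_rpow (by positivity)
                  (mul_nonneg (Real.rpow_nonneg hρz.le _) (Real.rpow_nonneg hd.le _))]
            _ = (2*C₀)^Nn * ((ρ z ^ (1-α))^Nn * (dist x z ^ α)^Nn) := by
                rw [Real.mul_rpow (Real.rpow_nonneg hρz.le _) (Real.rpow_nonneg hd.le _)]
            _ = (2*C₀)^Nn * (ρ z ^ M * dist x z ^ (Nn - M)) := by
                rw [← Real.rpow_mul hρz.le, ← Real.rpow_mul hd.le, hexp1, hexp2]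
        have b3 : dist x z ^ (Nn - M) * dist x z ^ (-(Nn+(n:ℝ))) = dist x z ^ (-(M+(n:ℝ))) := by
          rw [← Real.rpow_add hd]; congr 1; ring
        have hGeq : G z (dist x z) = ρ z ^ M * dist x z ^ (-(M+(n:ℝ))) := by
          rw [hGdef]; dsimp only; rw [if_neg (not_le.2 hbr)]
        rw [hGeq]
        have hXnn : (0:ℝ) ≤ ρ z ^ M * dist x z ^ (-(M+(n:ℝ))) := by
          rw [← hGeq]; exact hGnnd
        have hfin3 : |E t x z| ≤ A3 * (ρ z ^ M * dist x z ^ (-(M+(n:ℝ)))) := by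
          calc |E t x z| ≤ C₂ * ρ x ^ Nn * dist x z ^ (-(Nn+(n:ℝ))) := hE2
            _ ≤ C₂ * ((2*C₀)^Nn * (ρ z ^ M * dist x z ^ (Nn-M))) * dist x z ^ (-(Nn+(n:ℝ))) :=
                mul_le_mul_of_nonneg_right (mul_le_mul_of_nonneg_left b1 hC₂.le) hdNn
            _ = A3 * (ρ z ^ M * (dist x z ^ (Nn-M) * dist x z ^ (-(Nn+(n:ℝ))))) := by
                rw [hA3def]; ring
            _ = A3 * (ρ z ^ M * dist x z ^ (-(M+(n:ℝ)))) := by rw [b3]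
        calc |E t x z| ≤ A3 * (ρ z ^ M * dist x z ^ (-(M+(n:ℝ)))) := hfin3
          _ ≤ (A1+A2+A3) * (ρ z ^ M * dist x z ^ (-(M+(n:ℝ)))) :=
              mul_le_mul_of_nonneg_right (by linarith) hXnn
  -- basic measurability of the weight
  have hωae : AEMeasurable (fun x => ENNReal.ofReal (ω x)) (volume : Measure (Eu n)) :=
    ENNReal.measurable_ofReal.comp_aemeasurable hωloc.aestronglyMeasurable.aemeasurable
  -- volume ≪ wMeasure
  have hvac : (volume : Measure (Eu n)) ≪ wMeasure ω := by
    intro s hs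
    have hmeas := measurableSet_toMeasurable (wMeasure ω) s
    have hts : ∫⁻ x in toMeasurable (wMeasure ω) s, ENNReal.ofReal (ω x) ∂volume = 0 := by
      have h2 : wMeasure ω (toMeasurable (wMeasure ω) s) = 0 := by rwa [measure_toMeasurable]
      rwa [show wMeasure ω (toMeasurable (wMeasure ω) s) =
        ∫⁻ x in toMeasurable (wMeasure ω) s, ENNReal.ofReal (ω x) ∂volume from
        withDensity_apply _ hmeas] at h2
    have h0 : ∀ᵐ x ∂(volume.restrict (toMeasurable (wMeasure ω) s)),
        ENNReal.ofReal (ω x) = 0 := (lintegral_eq_zero_iff' hωae.restrict).1 hts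
    have h1 : (volume : Measure (Eu n)) (toMeasurable (wMeasure ω) s) = 0 := by
      have hFalse : ∀ᵐ x ∂(volume.restrict (toMeasurable (wMeasure ω) s)), False := by
        filter_upwards [h0] with x hx
        exact absurd hx (by simp [ENNReal.ofReal_eq_zero, not_le, hωpos x])
      have h2 := ae_iff.1 hFalse
      simp only [not_false_iff, Set.setOf_true] at h2
      rwa [Measure.restrict_apply_univ] at h2
    exact measure_mono_null (subset_toMeasurable _ _) h1
  -- ball volume and unit-ball constant
  set cn : ℝ := (volume (ball (0:Eu n) 1)).toReal with hcndef
  have hcn : 0 < cn := by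
    rw [hcndef]
    exact ENNReal.toReal_pos (measure_ball_pos volume 0 one_pos).ne' measure_ball_lt_top.ne
  have hfr : Module.finrank ℝ (Eu n) = n := by
    simp [finrank_euclideanSpace]
  have hvol : ∀ (y : Eu n) (r : ℝ), 0 ≤ r → (volume (ball y r)).toReal = r^n * cn := by
    intro y r hr
    rw [Measure.addHaar_ball volume y hr, ENNReal.toReal_mul,
      ENNReal.toReal_ofReal (by positivity), hfr, hcndef]
  have hIntOn : ∀ (y : Eu n) (r : ℝ), IntegrableOn ω (ball y r) volume := fun y r =>
    (hωloc.integrableOn_isCompact (isCompact_closedBall y r)).mono_set ball_subset_closedBall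
  -- half-power geometric data
  have hhalf : (0:ℝ) ≤ (1/2:ℝ)^ε := Real.rpow_nonneg (by norm_num) _
  have hhalflt : (1/2:ℝ)^ε < 1 := Real.rpow_lt_one (by norm_num) (by norm_num) hεpos
  have hinvpos : (0:ℝ) < 1 - (1/2:ℝ)^ε := by linarith
  set q : ℝ≥0∞ := ENNReal.ofReal ((1/2:ℝ)^ε) with hqdef
  set Ieps : ℝ := (1 - (1/2:ℝ)^ε)⁻¹ with hIdef
  have hIepspos : 0 < Ieps := by rw [hIdef]; positivity
  have hgeo : ∑' k:ℕ, q^k = ENNReal.ofReal Ieps := by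
    rw [ENNReal.tsum_geometric, hqdef,
      show (1:ℝ≥0∞) - ENNReal.ofReal ((1/2:ℝ)^ε) = ENNReal.ofReal (1 - (1/2:ℝ)^ε) by
        rw [ENNReal.ofReal_sub _ hhalf, ENNReal.ofReal_one],
      hIdef, ENNReal.ofReal_inv_of_pos hinvpos]
  -- the exponent juggling for powers of two
  have hpow2 : ∀ k : ℕ, ((1/2:ℝ)^k : ℝ)^ε = ((1/2:ℝ)^ε)^k := by
    intro k
    rw [← Real.rpow_natCast ((1/2:ℝ)) k, ← Real.rpow_mul (by norm_num), mul_comm,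
      Real.rpow_mul (by norm_num), Real.rpow_natCast]
  -- constants for the weight estimate
  set D₁ : ℝ := Cw * (1+4*C₃)^θ * (4^n*cn) * C₃ with hD₁def
  set D₂ : ℝ := Cw * (8*C₃)^θ * (4^n*cn) with hD₂def
  set B : ℝ := (D₁ + D₂) * Ieps with hBdef
  have hD₁pos : 0 < D₁ := by
    rw [hD₁def]
    have h1 := Real.rpow_pos_of_pos (show (0:ℝ) < 1+4*C₃ by positivity) θ
    positivity
  have hD₂pos : 0 < D₂ := by
    rw [hD₂def]
    have h1 := Real.rpow_pos_of_pos (show (0:ℝ) < 8*C₃ by positivity) θ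
    positivity
  have hBpos : 0 < B := by rw [hBdef]; positivity
  -- measurability of dist
  have hdistm : ∀ y : Eu n, Measurable (fun x : Eu n => dist x y) :=
    fun y => (Continuous.dist continuous_id continuous_const).measurable
  -- the weight estimate
  have hweight : ∀ᵐ y ∂(volume : Measure (Eu n)),
      ∫⁻ x, ENNReal.ofReal (G y (dist x y)) * ENNReal.ofReal (ω x) ∂volume ≤
        ENNReal.ofReal B * ENNReal.ofReal (ω y) := by
    filter_upwards [hA1] with y hy
    set Hy : Eu n → ℝ≥0∞ := fun x =>
      ENNReal.ofReal (G y (dist x y)) * ENNReal.ofReal (ω x) with hHydef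
    have hρy := hρpos y
    set R : ℝ := C₃ * ρ y with hRdef
    have hR : 0 < R := by rw [hRdef]; positivity
    have hmass : ∀ r : ℝ, 0 < r → ∫⁻ x in ball y r, ENNReal.ofReal (ω x) ∂volume ≤
        ENNReal.ofReal (Cw * ((1 + r/ρ y)^θ * (r^n*cn)) * ω y) := by
      intro r hr
      rw [← ofReal_integral_eq_lintegral_ofReal (hIntOn y r)
        (Filter.Eventually.of_forall fun x => (hωpos x).le)]
      apply ENNReal.ofReal_le_ofReal
      have h := hy y r hr (mem_ball_self hr)
      rw [PsiTheta] at h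
      rwa [hvol y r hr.le] at h
    set Sin : ℕ → Set (Eu n) :=
      fun k => {x | R / 2^(k+1) < dist x y ∧ dist x y ≤ R / 2^k} with hSindef
    set Sout : ℕ → Set (Eu n) :=
      fun k => {x | 2^k * R < dist x y ∧ dist x y ≤ 2^(k+1) * R} with hSoutdef
    have hSinMeas : ∀ k, MeasurableSet (Sin k) := fun k =>
      MeasurableSet.inter
        (measurableSet_lt measurable_const (hdistm y))
        (measurableSet_le (hdistm y) measurable_const)
    have hSoutMeas : ∀ k, MeasurableSet (Sout k) := fun k =>
      MeasurableSet.inter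
        (measurableSet_lt measurable_const (hdistm y))
        (measurableSet_le (hdistm y) measurable_const)
    have h2kpos : ∀ k : ℕ, (0:ℝ) < 2^k := fun k => by positivity
    have h2kone : ∀ k : ℕ, (1:ℝ) ≤ 2^k := fun k => one_le_pow₀ (by norm_num)
    have hcov_in : {x : Eu n | 0 < dist x y ∧ dist x y ≤ R} ⊆ ⋃ k, Sin k := by
      intro x hx
      obtain ⟨hd0, hdR⟩ := hx
      have hex : ∃ k : ℕ, R / 2 ^ (k+1) < dist x y := by
        obtain ⟨m, hm⟩ := exists_pow_lt_of_lt_one (div_pos hd0 hR) (by norm_num : (1/2:ℝ) < 1)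
        refine ⟨m, ?_⟩
        rw [lt_div_iff₀ hR] at hm
        have h1 : R / 2^(m+1) < R / 2^m := by
          apply div_lt_div_of_pos_left hR (by positivity)
          exact pow_lt_pow_right₀ (by norm_num) (Nat.lt_succ_self m)
        have h2 : R / 2^m = (1/2:ℝ)^m * R := by
          rw [one_div, inv_pow, div_eq_mul_inv, mul_comm]
        rw [h2] at h1
        linarith
      refine Set.mem_iUnion.2 ⟨Nat.find hex, Nat.find_spec hex, ?_⟩
      rcases Nat.eq_zero_or_pos (Nat.find hex) with h0 | hpos
      · rw [h0]; simpa using hdR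
      · obtain ⟨j, hj⟩ := Nat.exists_eq_succ_of_ne_zero (Nat.pos_iff_ne_zero.1 hpos)
        rw [hj]
        have hmin := Nat.find_min hex (show j < Nat.find hex by omega)
        push_neg at hmin
        exact hmin
    have hcov_out : {x : Eu n | R < dist x y} ⊆ ⋃ k, Sout k := by
      intro x hx
      have hd0 : 0 < dist x y := hR.trans hx
      have hex : ∃ k : ℕ, dist x y ≤ 2^(k+1) * R := by
        obtain ⟨m, hm⟩ := pow_unbounded_of_one_lt (dist x y / R) (by norm_num : (1:ℝ) < 2)
        refine ⟨m, ?_⟩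
        rw [div_lt_iff₀ hR] at hm
        have h1 : (2:ℝ)^m * R ≤ 2^(m+1) * R := mul_le_mul_of_nonneg_right
          (pow_le_pow_right₀ (by norm_num) (Nat.le_succ m)) hR.le
        linarith
      refine Set.mem_iUnion.2 ⟨Nat.find hex, ?_, Nat.find_spec hex⟩
      rcases Nat.eq_zero_or_pos (Nat.find hex) with h0 | hpos
      · rw [h0]; simpa using hx
      · obtain ⟨j, hj⟩ := Nat.exists_eq_succ_of_ne_zero (Nat.pos_iff_ne_zero.1 hpos)
        rw [hj]
        have hmin := Nat.find_min hex (show j < Nat.find hex by omega)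
        push_neg at hmin
        exact hmin
    -- inner annuli estimate
    have hann_in : ∀ k : ℕ, ∫⁻ x in Sin k, Hy x ∂volume ≤
        ENNReal.ofReal (D₁ * ω y) * q ^ k := by
      intro k
      set u : ℝ := R / 2 ^ (k+1) with hudef
      have hu0 : 0 < u := by rw [hudef]; positivity
      have hsub : Sin k ⊆ ball y (4 * u) := by
        intro x hx
        obtain ⟨h1, h2⟩ := hx
        have h3 : dist x y ≤ 2 * u := by
          rw [hudef]
          calc dist x y ≤ R / 2^k := h2
            _ = 2 * (R / 2^(k+1)) := by
                rw [pow_succ]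
                field_simp
        exact mem_ball.2 (by linarith)
      have hbranch : ∀ x ∈ Sin k, G y (dist x y) ≤ (ρ y)^(-ε) * u ^ (ε - (n:ℝ)) := by
        intro x hx
        obtain ⟨h1, h2⟩ := hx
        have hdR : dist x y ≤ R := h2.trans (div_le_self hR.le (h2kone k))
        have hGeq : G y (dist x y) = (ρ y)^(-ε) * dist x y ^ (ε - (n:ℝ)) := by
          rw [hGdef]; dsimp only; rw [if_pos (show dist x y ≤ C₃ * ρ y from hRdef ▸ hdR)]
        rw [hGeq]
        refine mul_le_mul_of_nonneg_left ?_ (Real.rpow_nonneg hρy.le _)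
        exact Real.rpow_le_rpow_of_nonpos hu0 h1.le (by linarith)
      have hc0 : (0:ℝ) ≤ Cw * cn * 4^n * ω y :=
        mul_nonneg (mul_nonneg (mul_nonneg hCw.le hcn.le) (by positivity)) (hωpos y).le
      have hreal : ((ρ y)^(-ε) * u^(ε-(n:ℝ))) *
          (Cw * ((1 + 4*u/ρ y)^θ * ((4*u)^n * cn)) * ω y) ≤
          (D₁ * ω y) * ((1/2:ℝ)^ε)^k := by
        have e1 : u ^ (ε-(n:ℝ)) * (4*u)^n = 4^n * u ^ ε := by
          rw [mul_pow, ← Real.rpow_natCast u n,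
            show u ^ (ε-(n:ℝ)) * ((4:ℝ)^n * u ^ ((n:ℕ):ℝ)) =
              (4:ℝ)^n * (u ^ (ε-(n:ℝ)) * u ^ ((n:ℕ):ℝ)) from by ring,
            ← Real.rpow_add hu0, show ε - (n:ℝ) + ((n:ℕ):ℝ) = ε from by push_cast; ring]
        have e2 : (1+4*u/ρ y)^θ ≤ (1+4*C₃)^θ := by
          apply Real.rpow_le_rpow (by positivity) _ hθ0
          have hub : 4*u/ρ y ≤ 4*C₃ := by
            rw [div_le_iff₀ hρy]
            have huR : u ≤ R := div_le_self hR.le (h2kone (k+1))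
            calc 4*u ≤ 4*R := by linarith
              _ = 4*C₃*ρ y := by rw [hRdef]; ring
          linarith
        have e3 : (ρ y)^(-ε) * u^ε ≤ C₃ * ((1/2:ℝ)^ε)^k := by
          have hu_le : u ≤ R * (1/2:ℝ)^k := by
            have h1 : R / 2^(k+1) ≤ R / 2^k := by
              rw [div_le_div_iff₀ (by positivity) (by positivity)]
              exact mul_le_mul_of_nonneg_left
                (pow_le_pow_right₀ (by norm_num) (Nat.le_succ k)) hR.le
            have h2 : R * (1/2:ℝ)^k = R / 2^k := by
              rw [one_div, inv_pow, div_eq_mul_inv]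
            rw [hudef, h2]
            exact h1
          have h1 : u^ε ≤ (R * (1/2:ℝ)^k)^ε := Real.rpow_le_rpow hu0.le hu_le hεpos.le
          have h2 : (R * (1/2:ℝ)^k)^ε = R^ε * ((1/2:ℝ)^ε)^k := by
            rw [Real.mul_rpow hR.le (by positivity), hpow2 k]
          have h3 : (ρ y)^(-ε) * R^ε = C₃^ε := by
            rw [hRdef, Real.mul_rpow hC₃pos.le hρy.le,
              show (ρ y)^(-ε) * (C₃^ε * (ρ y)^ε) = C₃^ε * ((ρ y)^(-ε) * (ρ y)^ε) from by ring,
              ← Real.rpow_add hρy, show -ε + ε = 0 by ring, Real.rpow_zero, mul_one]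
          have h4 : C₃^ε ≤ C₃ := by
            have h5 := Real.rpow_le_rpow_of_exponent_le hC₃1 hε1
            rwa [Real.rpow_one] at h5
          calc (ρ y)^(-ε) * u^ε ≤ (ρ y)^(-ε) * (R^ε * ((1/2:ℝ)^ε)^k) := by
                refine mul_le_mul_of_nonneg_left ?_ (Real.rpow_nonneg hρy.le _)
                rw [← h2]; exact h1
            _ = ((ρ y)^(-ε) * R^ε) * ((1/2:ℝ)^ε)^k := by ring
            _ = C₃^ε * ((1/2:ℝ)^ε)^k := by rw [h3]
            _ ≤ C₃ * ((1/2:ℝ)^ε)^k := mul_le_mul_of_nonneg_right h4 (by positivity)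
        calc ((ρ y)^(-ε) * u^(ε-(n:ℝ))) * (Cw * ((1 + 4*u/ρ y)^θ * ((4*u)^n * cn)) * ω y)
            = (Cw * cn * ω y * (1+4*u/ρ y)^θ) * (u^(ε-(n:ℝ)) * (4*u)^n) * (ρ y)^(-ε) := by
              ring
          _ = (Cw * cn * ω y * (1+4*u/ρ y)^θ) * (4^n * u^ε) * (ρ y)^(-ε) := by rw [e1]
          _ = (Cw * cn * 4^n * ω y) * ((1+4*u/ρ y)^θ) * ((ρ y)^(-ε) * u^ε) := by ring
          _ ≤ (Cw * cn * 4^n * ω y) * ((1+4*C₃)^θ) * (C₃ * ((1/2:ℝ)^ε)^k) := by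
              refine mul_le_mul (mul_le_mul_of_nonneg_left e2 hc0) e3 ?_ ?_
              · exact mul_nonneg (Real.rpow_nonneg hρy.le _) (Real.rpow_nonneg hu0.le _)
              · exact mul_nonneg hc0 (Real.rpow_nonneg (by positivity) _)
          _ = (D₁ * ω y) * ((1/2:ℝ)^ε)^k := by rw [hD₁def]; ring
      calc ∫⁻ x in Sin k, Hy x ∂volume
          ≤ ∫⁻ x in Sin k,
              ENNReal.ofReal ((ρ y)^(-ε) * u^(ε-(n:ℝ))) * ENNReal.ofReal (ω x) ∂volume := by
            refine setLIntegral_mono' (hSinMeas k) fun x hx => ?_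
            exact mul_le_mul_left (ENNReal.ofReal_le_ofReal (hbranch x hx)) _
        _ = ENNReal.ofReal ((ρ y)^(-ε) * u^(ε-(n:ℝ))) *
              ∫⁻ x in Sin k, ENNReal.ofReal (ω x) ∂volume :=
            lintegral_const_mul' _ _ ENNReal.ofReal_ne_top
        _ ≤ ENNReal.ofReal ((ρ y)^(-ε) * u^(ε-(n:ℝ))) *
              ∫⁻ x in ball y (4*u), ENNReal.ofReal (ω x) ∂volume :=
            mul_le_mul_right (lintegral_mono_set hsub) _
        _ ≤ ENNReal.ofReal ((ρ y)^(-ε) * u^(ε-(n:ℝ))) *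
              ENNReal.ofReal (Cw * ((1 + 4*u/ρ y)^θ * ((4*u)^n * cn)) * ω y) :=
            mul_le_mul_right (hmass (4*u) (by positivity)) _
        _ = ENNReal.ofReal (((ρ y)^(-ε) * u^(ε-(n:ℝ))) *
              (Cw * ((1 + 4*u/ρ y)^θ * ((4*u)^n * cn)) * ω y)) :=
            (ENNReal.ofReal_mul
              (mul_nonneg (Real.rpow_nonneg hρy.le _) (Real.rpow_nonneg hu0.le _))).symm
        _ ≤ ENNReal.ofReal ((D₁ * ω y) * ((1/2:ℝ)^ε)^k) := ENNReal.ofReal_le_ofReal hreal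
        _ = ENNReal.ofReal (D₁ * ω y) * q ^ k := by
            rw [ENNReal.ofReal_mul (mul_nonneg hD₁pos.le (hωpos y).le),
              ENNReal.ofReal_pow hhalf, hqdef]
    -- outer annuli estimate
    have hann_out : ∀ k : ℕ, ∫⁻ x in Sout k, Hy x ∂volume ≤
        ENNReal.ofReal (D₂ * ω y) * q ^ k := by
      intro k
      set v : ℝ := 2^k * R with hvdef
      have hv0 : 0 < v := by rw [hvdef]; positivity
      have hsub : Sout k ⊆ ball y (4 * v) := by
        intro x hx
        obtain ⟨h1, h2⟩ := hx
        have h3 : dist x y ≤ 2 * v := by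
          rw [hvdef]
          calc dist x y ≤ 2^(k+1) * R := h2
            _ = 2 * (2^k * R) := by rw [pow_succ]; ring
        exact mem_ball.2 (by linarith)
      have hbranch : ∀ x ∈ Sout k, G y (dist x y) ≤ (ρ y)^M * v ^ (-(M+(n:ℝ))) := by
        intro x hx
        obtain ⟨h1, h2⟩ := hx
        have hRv : R ≤ v := by
          rw [hvdef]; exact le_mul_of_one_le_left hR.le (h2kone k)
        have hGeq : G y (dist x y) = (ρ y)^M * dist x y ^ (-(M+(n:ℝ))) := by
          rw [hGdef]; dsimp only
          rw [if_neg (not_le.2 (show C₃ * ρ y < dist x y from hRdef ▸ (by linarith)))]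
        rw [hGeq]
        refine mul_le_mul_of_nonneg_left ?_ (Real.rpow_nonneg hρy.le _)
        exact Real.rpow_le_rpow_of_nonpos hv0 (by linarith) (by linarith)
      have hc0 : (0:ℝ) ≤ Cw * cn * 4^n * ω y :=
        mul_nonneg (mul_nonneg (mul_nonneg hCw.le hcn.le) (by positivity)) (hωpos y).le
      have hreal : ((ρ y)^M * v^(-(M+(n:ℝ)))) *
          (Cw * ((1 + 4*v/ρ y)^θ * ((4*v)^n * cn)) * ω y) ≤
          (D₂ * ω y) * ((1/2:ℝ)^ε)^k := by
        have e1 : v ^ (-(M+(n:ℝ))) * (4*v)^n = 4^n * v ^ (-M) := by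
          rw [mul_pow, ← Real.rpow_natCast v n,
            show v ^ (-(M+(n:ℝ))) * ((4:ℝ)^n * v ^ ((n:ℕ):ℝ)) =
              (4:ℝ)^n * (v ^ (-(M+(n:ℝ))) * v ^ ((n:ℕ):ℝ)) from by ring,
            ← Real.rpow_add hv0, show -(M+(n:ℝ)) + ((n:ℕ):ℝ) = -M from by push_cast; ring]
        have e2 : (1+4*v/ρ y)^θ ≤ (8*C₃)^θ * ((2:ℝ)^k)^θ := by
          have hvρ : 4*v/ρ y = 2^k * (4*C₃) := by
            rw [hvdef, hRdef]
            field_simp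
          have h1 : 1 + 4*v/ρ y ≤ 2^k * (8*C₃) := by
            rw [hvρ]
            have h1a : (1:ℝ) ≤ 2^k * C₃ := by
              have := mul_le_mul (h2kone k) hC₃1 zero_le_one
                (le_trans zero_le_one (h2kone k))
              linarith
            nlinarith [h1a]
          calc (1+4*v/ρ y)^θ ≤ ((2:ℝ)^k * (8*C₃))^θ :=
                Real.rpow_le_rpow (by positivity) h1 hθ0
            _ = ((2:ℝ)^k)^θ * (8*C₃)^θ := Real.mul_rpow (by positivity) (by positivity)
            _ = (8*C₃)^θ * ((2:ℝ)^k)^θ := by ring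
        have e3 : (ρ y)^M * v^(-M) * ((2:ℝ)^k)^θ ≤ ((1/2:ℝ)^ε)^k := by
          have h1 : (ρ y)^M * v^(-M) = ((2:ℝ)^k * C₃)^(-M) := by
            rw [hvdef, hRdef, show (2:ℝ)^k * (C₃ * ρ y) = ((2:ℝ)^k * C₃) * ρ y from by ring,
              Real.mul_rpow (by positivity) hρy.le,
              show (ρ y)^M * (((2:ℝ)^k*C₃)^(-M) * (ρ y)^(-M)) =
                ((2:ℝ)^k*C₃)^(-M) * ((ρ y)^M * (ρ y)^(-M)) from by ring,
              ← Real.rpow_add hρy, show M + -M = 0 from by ring, Real.rpow_zero, mul_one]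
          have h2 : ((2:ℝ)^k * C₃)^(-M) ≤ ((2:ℝ)^k)^(-M) := by
            rw [Real.mul_rpow (by positivity) hC₃pos.le]
            have h2a : C₃^(-M) ≤ 1 :=
              Real.rpow_le_one_of_one_le_of_nonpos hC₃1 (by linarith)
            have h2b : (0:ℝ) ≤ ((2:ℝ)^k)^(-M) := Real.rpow_nonneg (h2kpos k).le _
            calc ((2:ℝ)^k)^(-M) * C₃^(-M) ≤ ((2:ℝ)^k)^(-M) * 1 :=
                mul_le_mul_of_nonneg_left h2a h2b
              _ = ((2:ℝ)^k)^(-M) := mul_one _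
          have h3 : ((2:ℝ)^k)^(-M) * ((2:ℝ)^k)^θ = ((2:ℝ)^k)^(θ-M) := by
            rw [← Real.rpow_add (h2kpos k)]; congr 1; ring
          have h4 : ((2:ℝ)^k)^(θ-M) ≤ ((2:ℝ)^k)^(-ε) := by
            apply Real.rpow_le_rpow_of_exponent_le (h2kone k)
            rw [hMdef]; linarith
          have h5 : ((2:ℝ)^k)^(-ε) = ((1/2:ℝ)^ε)^k := by
            rw [← hpow2 k, one_div, inv_pow, Real.inv_rpow (by positivity),
              ← Real.rpow_neg (by positivity)]
          calc (ρ y)^M * v^(-M) * ((2:ℝ)^k)^θ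
              = ((2:ℝ)^k * C₃)^(-M) * ((2:ℝ)^k)^θ := by rw [h1]
            _ ≤ ((2:ℝ)^k)^(-M) * ((2:ℝ)^k)^θ :=
                mul_le_mul_of_nonneg_right h2 (Real.rpow_nonneg (h2kpos k).le θ)
            _ = ((2:ℝ)^k)^(θ-M) := h3
            _ ≤ ((2:ℝ)^k)^(-ε) := h4
            _ = ((1/2:ℝ)^ε)^k := h5
        calc ((ρ y)^M * v^(-(M+(n:ℝ)))) * (Cw * ((1 + 4*v/ρ y)^θ * ((4*v)^n * cn)) * ω y)
            = (Cw * cn * ω y * (1+4*v/ρ y)^θ) * (v^(-(M+(n:ℝ))) * (4*v)^n) * (ρ y)^M := by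
              ring
          _ = (Cw * cn * ω y * (1+4*v/ρ y)^θ) * (4^n * v^(-M)) * (ρ y)^M := by rw [e1]
          _ = (Cw * cn * 4^n * ω y) * ((1+4*v/ρ y)^θ) * ((ρ y)^M * v^(-M)) := by ring
          _ ≤ (Cw * cn * 4^n * ω y) * ((8*C₃)^θ * ((2:ℝ)^k)^θ) * ((ρ y)^M * v^(-M)) := by
              refine mul_le_mul_of_nonneg_right (mul_le_mul_of_nonneg_left e2 hc0) ?_
              exact mul_nonneg (Real.rpow_nonneg hρy.le _) (Real.rpow_nonneg hv0.le _)
          _ = (Cw * cn * 4^n * (8*C₃)^θ * ω y) * ((ρ y)^M * v^(-M) * ((2:ℝ)^k)^θ) := by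
              ring
          _ ≤ (Cw * cn * 4^n * (8*C₃)^θ * ω y) * ((1/2:ℝ)^ε)^k := by
              refine mul_le_mul_of_nonneg_left e3 ?_
              exact mul_nonneg (mul_nonneg (mul_nonneg (mul_nonneg hCw.le hcn.le)
                (by positivity)) (Real.rpow_nonneg (by positivity) θ)) (hωpos y).le
          _ = (D₂ * ω y) * ((1/2:ℝ)^ε)^k := by rw [hD₂def]; ring
      calc ∫⁻ x in Sout k, Hy x ∂volume
          ≤ ∫⁻ x in Sout k,
              ENNReal.ofReal ((ρ y)^M * v^(-(M+(n:ℝ)))) * ENNReal.ofReal (ω x) ∂volume := by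
            refine setLIntegral_mono' (hSoutMeas k) fun x hx => ?_
            exact mul_le_mul_left (ENNReal.ofReal_le_ofReal (hbranch x hx)) _
        _ = ENNReal.ofReal ((ρ y)^M * v^(-(M+(n:ℝ)))) *
              ∫⁻ x in Sout k, ENNReal.ofReal (ω x) ∂volume :=
            lintegral_const_mul' _ _ ENNReal.ofReal_ne_top
        _ ≤ ENNReal.ofReal ((ρ y)^M * v^(-(M+(n:ℝ)))) *
              ∫⁻ x in ball y (4*v), ENNReal.ofReal (ω x) ∂volume :=
            mul_le_mul_right (lintegral_mono_set hsub) _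
        _ ≤ ENNReal.ofReal ((ρ y)^M * v^(-(M+(n:ℝ)))) *
              ENNReal.ofReal (Cw * ((1 + 4*v/ρ y)^θ * ((4*v)^n * cn)) * ω y) :=
            mul_le_mul_right (hmass (4*v) (by positivity)) _
        _ = ENNReal.ofReal (((ρ y)^M * v^(-(M+(n:ℝ)))) *
              (Cw * ((1 + 4*v/ρ y)^θ * ((4*v)^n * cn)) * ω y)) :=
            (ENNReal.ofReal_mul
              (mul_nonneg (Real.rpow_nonneg hρy.le _) (Real.rpow_nonneg hv0.le _))).symm
        _ ≤ ENNReal.ofReal ((D₂ * ω y) * ((1/2:ℝ)^ε)^k) := ENNReal.ofReal_le_ofReal hreal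
        _ = ENNReal.ofReal (D₂ * ω y) * q ^ k := by
            rw [ENNReal.ofReal_mul (mul_nonneg hD₂pos.le (hωpos y).le),
              ENNReal.ofReal_pow hhalf, hqdef]
    -- put the pieces together
    calc ∫⁻ x, Hy x ∂volume
        = ∫⁻ x in Set.univ, Hy x ∂volume := (setLIntegral_univ _).symm
      _ ≤ ∫⁻ x in ({y} ∪ ({x : Eu n | 0 < dist x y ∧ dist x y ≤ R} ∪
            {x : Eu n | R < dist x y})), Hy x ∂volume := by
          refine lintegral_mono_set fun x _ => ?_
          rcases eq_or_ne x y with h | h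
          · exact Or.inl (by simp [h])
          · rcases le_or_gt (dist x y) R with h2 | h2
            · exact Or.inr (Or.inl ⟨dist_pos.2 h, h2⟩)
            · exact Or.inr (Or.inr h2)
      _ ≤ ∫⁻ x in ({y} : Set (Eu n)), Hy x ∂volume +
          (∫⁻ x in {x : Eu n | 0 < dist x y ∧ dist x y ≤ R}, Hy x ∂volume +
           ∫⁻ x in {x : Eu n | R < dist x y}, Hy x ∂volume) :=
          le_trans (lintegral_union_le _ _ _) (add_le_add_right (lintegral_union_le _ _ _) _)
      _ ≤ 0 + (ENNReal.ofReal (D₁ * ω y) * ENNReal.ofReal Ieps +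
           ENNReal.ofReal (D₂ * ω y) * ENNReal.ofReal Ieps) := by
          refine add_le_add (le_of_eq (setLIntegral_measure_zero _ _ (measure_singleton y)))
            (add_le_add ?_ ?_)
          · calc ∫⁻ x in {x : Eu n | 0 < dist x y ∧ dist x y ≤ R}, Hy x ∂volume
                ≤ ∫⁻ x in ⋃ k, Sin k, Hy x ∂volume := lintegral_mono_set hcov_in
              _ ≤ ∑' k, ∫⁻ x in Sin k, Hy x ∂volume := lintegral_iUnion_le _ _
              _ ≤ ∑' k : ℕ, ENNReal.ofReal (D₁ * ω y) * q ^ k := ENNReal.tsum_le_tsum hann_in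
              _ = ENNReal.ofReal (D₁ * ω y) * ∑' k : ℕ, q ^ k := ENNReal.tsum_mul_left
              _ = ENNReal.ofReal (D₁ * ω y) * ENNReal.ofReal Ieps := by rw [hgeo]
          · calc ∫⁻ x in {x : Eu n | R < dist x y}, Hy x ∂volume
                ≤ ∫⁻ x in ⋃ k, Sout k, Hy x ∂volume := lintegral_mono_set hcov_out
              _ ≤ ∑' k, ∫⁻ x in Sout k, Hy x ∂volume := lintegral_iUnion_le _ _
              _ ≤ ∑' k : ℕ, ENNReal.ofReal (D₂ * ω y) * q ^ k := ENNReal.tsum_le_tsum hann_out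
              _ = ENNReal.ofReal (D₂ * ω y) * ∑' k : ℕ, q ^ k := ENNReal.tsum_mul_left
              _ = ENNReal.ofReal (D₂ * ω y) * ENNReal.ofReal Ieps := by rw [hgeo]
      _ = ENNReal.ofReal B * ENNReal.ofReal (ω y) := by
          rw [zero_add, ← ENNReal.ofReal_mul (mul_nonneg hD₁pos.le (hωpos y).le),
            ← ENNReal.ofReal_mul (mul_nonneg hD₂pos.le (hωpos y).le),
            ← ENNReal.ofReal_add
              (mul_nonneg (mul_nonneg hD₁pos.le (hωpos y).le) hIepspos.le)
              (mul_nonneg (mul_nonneg hD₂pos.le (hωpos y).le) hIepspos.le),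
            ← ENNReal.ofReal_mul hBpos.le]
          congr 1
          rw [hBdef]
          ring
  -- final assembly
  refine ⟨A * B, mul_pos hApos hBpos, ?_⟩
  intro f hf
  -- measurable representative of f
  have hfae : AEMeasurable f (volume : Measure (Eu n)) := by
    obtain ⟨g, hg, hfg⟩ := hf.1.aemeasurable
    exact ⟨g, hg, hfg.filter_mono hvac.ae_le⟩
  set f' : Eu n → ℝ := hfae.mk f with hf'def
  have hf'meas : Measurable f' := hfae.measurable_mk
  have hff' : f =ᵐ[(volume : Measure (Eu n))] f' := hfae.ae_eq_mk
  have hff'w : f =ᵐ[wMeasure ω] f' :=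
    hff'.filter_mono (withDensity_absolutelyContinuous _ _).ae_le
  have habs : Measurable (fun z => |f' z|) := by
    simpa [Real.norm_eq_abs] using hf'meas.norm
  set F : Eu n → Eu n → ℝ≥0∞ := fun x z =>
    ENNReal.ofReal (A * G z (dist x z)) * ENNReal.ofReal |f' z| with hFdef
  have hrpowm : ∀ c : ℝ, Measurable (fun s : ℝ => s ^ c) := fun c => measurable_id.pow_const c
  have hGm : Measurable (fun p : Eu n × Eu n => G p.2 (dist p.1 p.2)) := by
    have hd2 : Measurable (fun p : Eu n × Eu n => dist p.1 p.2) := measurable_dist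
    have hρ2 : Measurable (fun p : Eu n × Eu n => ρ p.2) :=
      hρc.measurable.comp measurable_snd
    simp only [hGdef]
    refine Measurable.ite (measurableSet_le hd2 (measurable_const.mul hρ2)) ?_ ?_
    · exact ((hrpowm (-ε)).comp hρ2).mul ((hrpowm (ε - (n:ℝ))).comp hd2)
    · exact ((hrpowm M).comp hρ2).mul ((hrpowm (-(M+(n:ℝ)))).comp hd2)
  have hFm : Measurable (fun p : Eu n × Eu n => F p.1 p.2) := by
    simp only [hFdef]
    exact (ENNReal.measurable_ofReal.comp (measurable_const.mul hGm)).mul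
      ((ENNReal.measurable_ofReal.comp habs).comp measurable_snd)
  have hIm : Measurable (fun x : Eu n => ∫⁻ z, F x z ∂volume) :=
    Measurable.lintegral_prod_right' (f := fun p : Eu n × Eu n => F p.1 p.2) hFm
  -- pointwise bound for the maximal operator
  have hsing : ∀ x : Eu n, ∀ᵐ z ∂(volume : Measure (Eu n)), z ≠ x := by
    intro x
    rw [ae_iff]
    simpa using measure_singleton x
  have hptwise : ∀ x : Eu n,
      (⨆ (t : ℝ) (_ : 0 < t ∧ t < ρ x), ENNReal.ofReal |∫ z, E t x z * f z|) ≤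
        ∫⁻ z, F x z ∂volume := by
    intro x
    refine iSup₂_le fun t ht => ?_
    obtain ⟨ht0, htρ⟩ := ht
    have step1 : ENNReal.ofReal |∫ z, E t x z * f z| ≤
        ∫⁻ z, (‖E t x z * f z‖₊ : ℝ≥0∞) ∂volume := by
      rw [← Real.enorm_eq_ofReal_abs]
      exact enorm_integral_le_lintegral_enorm _
    refine step1.trans (lintegral_mono_ae ?_)
    filter_upwards [hsing x, hff'] with z hz hfz
    rw [← enorm_eq_nnnorm, Real.enorm_eq_ofReal_abs, abs_mul, ENNReal.ofReal_mul (abs_nonneg _), hFdef]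
    dsimp only
    refine mul_le_mul' ?_ ?_
    · exact ENNReal.ofReal_le_ofReal (hker t x z ht0 htρ (Ne.symm hz))
    · rw [hfz]
  -- product measurability for Tonelli
  have hωprod : AEMeasurable (fun p : Eu n × Eu n => ENNReal.ofReal (ω p.1))
      ((volume : Measure (Eu n)).prod volume) :=
    hωae.comp_quasiMeasurePreserving Measure.quasiMeasurePreserving_fst
  have hswap : AEMeasurable
      (Function.uncurry fun (x z : Eu n) => ENNReal.ofReal (ω x) * F x z)
      ((volume : Measure (Eu n)).prod volume) :=
    hωprod.mul hFm.aemeasurable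
  -- the main chain
  calc ∫⁻ x, (⨆ (t : ℝ) (_ : 0 < t ∧ t < ρ x),
        ENNReal.ofReal |∫ z, E t x z * f z|) ∂(wMeasure ω)
      ≤ ∫⁻ x, (∫⁻ z, F x z ∂volume) ∂(wMeasure ω) := lintegral_mono hptwise
    _ = ∫⁻ x, ENNReal.ofReal (ω x) * ∫⁻ z, F x z ∂volume ∂volume :=
        lintegral_withDensity_eq_lintegral_mul₀ hωae hIm.aemeasurable
    _ = ∫⁻ x, ∫⁻ z, ENNReal.ofReal (ω x) * F x z ∂volume ∂volume :=
        lintegral_congr fun x => (lintegral_const_mul' _ _ ENNReal.ofReal_ne_top).symm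
    _ = ∫⁻ z, ∫⁻ x, ENNReal.ofReal (ω x) * F x z ∂volume ∂volume :=
        lintegral_lintegral_swap hswap
    _ = ∫⁻ z, (ENNReal.ofReal A * ENNReal.ofReal |f' z|) *
          ∫⁻ x, ENNReal.ofReal (G z (dist x z)) * ENNReal.ofReal (ω x) ∂volume ∂volume := by
        refine lintegral_congr fun z => ?_
        rw [← lintegral_const_mul' _ _
          (ENNReal.mul_ne_top ENNReal.ofReal_ne_top ENNReal.ofReal_ne_top)]
        refine lintegral_congr fun x => ?_
        rw [hFdef]
        dsimp only
        rw [ENNReal.ofReal_mul hApos.le]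
        ring
    _ ≤ ∫⁻ z, (ENNReal.ofReal A * ENNReal.ofReal |f' z|) *
          (ENNReal.ofReal B * ENNReal.ofReal (ω z)) ∂volume := by
        refine lintegral_mono_ae ?_
        filter_upwards [hweight] with z hz
        exact mul_le_mul_right hz _
    _ = (ENNReal.ofReal A * ENNReal.ofReal B) *
          ∫⁻ z, ENNReal.ofReal (ω z) * ENNReal.ofReal |f' z| ∂volume := by
        rw [← lintegral_const_mul' _ _
          (ENNReal.mul_ne_top ENNReal.ofReal_ne_top ENNReal.ofReal_ne_top)]
        exact lintegral_congr fun z => by ring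
    _ = (ENNReal.ofReal A * ENNReal.ofReal B) *
          ∫⁻ z, ENNReal.ofReal |f' z| ∂(wMeasure ω) := by
        congr 1
        exact (lintegral_withDensity_eq_lintegral_mul₀ hωae
          (ENNReal.measurable_ofReal.comp habs).aemeasurable).symm
    _ = ENNReal.ofReal (A*B) * ∫⁻ x, ENNReal.ofReal |f x| ∂(wMeasure ω) := by
        rw [ENNReal.ofReal_mul hApos.le]
        congr 1
        refine lintegral_congr_ae ?_
        filter_upwards [hff'w] with z hz
        rw [hz]

end
end

section
/- Let n ≥ 3, let ρ be a critical radius function on ℝⁿ with constants C₀, k₀, and let ω ∈ A_∞^{ρ,∞}(ℝⁿ). Let T_t(x,y) ≥ 0 be a measurable family of kernels satisfying: (a) for every l > 0 there is C_l such that T_t(x,y) ≤ C_l (1+|x−y|/ρ(y))^{−l} |x−y|^{−n} for all t > 0, x ≠ y; (b) there exist δ > 0, c > 0 such that for every M > 0 there is C_M with |T_t(x,y) − T_t(x,y')| ≤ C_M (|y−y'|/√t)^δ t^{−n/2} (1+√t/ρ(y))^{−M} exp(−c|x−y|²/t) whenever |y−y'| < √t. Let a be a (p,q,s)_ω-atom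 with supp a ⊂ Q(x₀,r) and set T*a(x) = sup_{t>0} |∫ T_t(x,y) a(y) dy|. Then for all x ∉ 4Q: (i) if L₂ρ(x₀) ≤ r ≤ L₁ρ(x₀), then for every M > 0, T*a(x) ≤ C ‖a‖_{L¹(ℝⁿ)} r^M |x−x₀|^{−(n+M)}; (ii) if r < L₂ρ(x₀) and |x−x₀| ≤ 2ρ(x₀), then T*a(x) ≤ C ‖a‖_{L¹(ℝⁿ)} r^δ |x−x₀|^{−(n+δ)}; (iii) if r < L₂ρ(x₀) and |x−x₀| ≥ ρ(x₀)/√n, then for every M > 0, T*a(x) ≤ C ‖a‖_{L¹(ℝⁿ)} r^δ |x−x₀|^{−(n+δ)} (ρ(x₀)/|x−x₀|)^M. -/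
open MeasureTheory Metric Set Filter
open scoped ENNReal NNReal BigOperators Topology

noncomputable section

variable {n : ℕ}

set_option maxHeartbeats 2000000


/-- the maximal operator `T*a(x) = sup_{t>0} |∫ T_t(x,y) a(y) dy|`. -/
def TstarK {n : ℕ} (T : ℝ → Eu n → Eu n → ℝ) (a : Eu n → ℝ) (x : Eu n) : ℝ≥0∞ :=
  ⨆ (t : ℝ) (_ : 0 < t), ENNReal.ofReal |∫ y, T t x y * a y|


/-! ### Auxiliary lemmas for the proof of `stmt17` -/

lemma coord_le_dist (x y : Eu n) (i : Fin n) : |x i - y i| ≤ dist x y := by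
  rw [EuclideanSpace.dist_eq]
  rw [← Real.sqrt_sq_eq_abs]
  apply Real.sqrt_le_sqrt
  have := Finset.single_le_sum (f := fun j => dist (x j) (y j) ^ 2)
    (fun j _ => sq_nonneg _) (Finset.mem_univ i)
  simpa [Real.dist_eq, sq_abs] using this

lemma dist_le_of_mem_cube {x₀ : Eu n} {r : ℝ} (hr : 0 ≤ r) {y : Eu n} (hy : y ∈ cube x₀ r) :
    dist y x₀ ≤ Real.sqrt n * (r / 2) := by
  rw [EuclideanSpace.dist_eq]
  have h2 : Real.sqrt n * (r / 2) = Real.sqrt (n * (r/2)^2) := by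
    rw [Real.sqrt_mul (by positivity), Real.sqrt_sq (by positivity)]
  rw [h2]
  apply Real.sqrt_le_sqrt
  calc ∑ i, dist (y i) (x₀ i) ^ 2 ≤ ∑ _i : Fin n, (r/2)^2 := by
        apply Finset.sum_le_sum
        intro i _
        rw [Real.dist_eq]
        have h0 : 0 ≤ |y i - x₀ i| := abs_nonneg _
        nlinarith [hy i]
    _ = n * (r/2)^2 := by simp [Finset.sum_const, nsmul_eq_mul]

lemma cube_convex (x₀ : Eu n) (r : ℝ) : Convex ℝ (cube x₀ r) := by
  intro y hy y' hy' s1 s2 hs1 hs2 hsum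
  intro i
  have h1 : (s1 • y + s2 • y') i = s1 * y i + s2 * y' i := by
    simp [PiLp.add_apply, PiLp.smul_apply, smul_eq_mul]
  rw [h1]
  have h2 : s1 * y i + s2 * y' i - x₀ i = s1 * (y i - x₀ i) + s2 * (y' i - x₀ i) := by
    linear_combination (x₀ i) * hsum
  rw [h2]
  calc |s1 * (y i - x₀ i) + s2 * (y' i - x₀ i)|
      ≤ |s1 * (y i - x₀ i)| + |s2 * (y' i - x₀ i)| := abs_add_le _ _
    _ ≤ s1 * (r/2) + s2 * (r/2) := by
        rw [abs_mul, abs_mul, abs_of_nonneg hs1, abs_of_nonneg hs2]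
        gcongr
        · exact hy i
        · exact hy' i
    _ = r / 2 := by rw [← add_mul, hsum, one_mul]

lemma rpow_neg_anti {x y s : ℝ} (hx : 0 < x) (hxy : x ≤ y) (hs : 0 ≤ s) :
    y ^ (-s) ≤ x ^ (-s) := by
  rw [Real.rpow_neg (by linarith), Real.rpow_neg hx.le]
  exact inv_anti₀ (Real.rpow_pos_of_pos hx _) (Real.rpow_le_rpow hx.le hxy hs)

lemma one_add_rpow_neg_le {v s : ℝ} (hv : 0 < v) (hs : 0 ≤ s) :
    (1 + v) ^ (-s) ≤ v ^ (-s) :=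
  rpow_neg_anti hv (by linarith) hs

lemma rpow_le_one_add {b e : ℝ} (hb : 0 ≤ b) (he0 : 0 ≤ e) (he1 : e ≤ 1) :
    b ^ e ≤ 1 + b := by
  rcases le_or_gt b 1 with h | h
  · calc b ^ e ≤ 1 := Real.rpow_le_one hb h he0
      _ ≤ 1 + b := by linarith
  · calc b ^ e ≤ b ^ (1:ℝ) := Real.rpow_le_rpow_of_exponent_le h.le he1
      _ = b := Real.rpow_one b
      _ ≤ 1 + b := by linarith

lemma poly_exp_sq (α β : ℝ) (hα : 0 ≤ α) (hβ : 0 < β) :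
    ∃ A : ℝ, 0 < A ∧ ∀ v : ℝ, 0 < v → v ^ α * Real.exp (-(β * v ^ 2)) ≤ A := by
  set m := ⌈α⌉₊ with hm
  refine ⟨1 + ((m : ℝ) / β) ^ m, by positivity, ?_⟩
  intro v hv
  have hexp : Real.exp (-(β * v ^ 2)) ≤ 1 := by
    rw [Real.exp_le_one_iff]; nlinarith
  rcases le_or_gt v 1 with h1 | h1
  · have : v ^ α ≤ 1 := Real.rpow_le_one hv.le h1 hα
    nlinarith [Real.exp_pos (-(β * v ^ 2)), Real.rpow_pos_of_pos hv α,
      pow_nonneg (by positivity : (0:ℝ) ≤ (m:ℝ)/β) m]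
  · have hva : v ^ α ≤ v ^ (m : ℝ) :=
      Real.rpow_le_rpow_of_exponent_le h1.le (Nat.le_ceil α)
    have hvm : v ^ (m : ℝ) = v ^ m := Real.rpow_natCast v m
    have hv2 : v ^ m ≤ (v ^ 2) ^ m := by
      apply pow_le_pow_left₀ (by positivity)
      nlinarith
    have key : (v ^ 2) ^ m ≤ ((m:ℝ)/β)^m * Real.exp (β * v ^ 2) := by
      rcases Nat.eq_zero_or_pos m with h0 | h0
      · simp [h0]; positivity
      · have hx : (0:ℝ) ≤ β * v ^ 2 / m := by positivity
        have e1 : (β * v ^ 2 / m) ^ m ≤ (1 + β * v ^ 2 / m) ^ m :=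
          pow_le_pow_left₀ hx (by linarith) m
        have e2 : (1 + β * v ^ 2 / m) ^ m ≤ Real.exp (β * v ^ 2 / m) ^ m := by
          apply pow_le_pow_left₀ (by positivity)
          calc 1 + β * v ^ 2 / m = β * v ^ 2 / m + 1 := by ring
            _ ≤ Real.exp (β * v ^ 2 / m) := Real.add_one_le_exp _
        have e3 : Real.exp (β * v ^ 2 / m) ^ m = Real.exp (β * v ^ 2) := by
          rw [← Real.exp_nat_mul]
          congr 1
          field_simp
        have e4 : (v ^ 2) ^ m = ((m:ℝ)/β) ^ m * (β * v ^ 2 / m) ^ m := by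
          rw [← mul_pow]
          congr 1
          field_simp
        rw [e4]
        calc ((m:ℝ)/β) ^ m * (β * v ^ 2 / m) ^ m
            ≤ ((m:ℝ)/β) ^ m * Real.exp (β * v ^ 2) := by
              apply mul_le_mul_of_nonneg_left _ (by positivity)
              calc (β * v ^ 2 / m) ^ m ≤ (1 + β * v ^ 2 / m) ^ m := e1
                _ ≤ Real.exp (β * v ^ 2 / m) ^ m := e2
                _ = Real.exp (β * v ^ 2) := e3
          _ = ((m:ℝ)/β) ^ m * Real.exp (β * v ^ 2) := rfl
    calc v ^ α * Real.exp (-(β * v ^ 2)) ≤ (v^2)^m * Real.exp (-(β * v ^ 2)) := by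
          rw [hvm] at hva
          exact mul_le_mul_of_nonneg_right (hva.trans hv2) (Real.exp_pos _).le
      _ ≤ ((m:ℝ)/β)^m * Real.exp (β * v ^ 2) * Real.exp (-(β * v ^ 2)) :=
          mul_le_mul_of_nonneg_right key (Real.exp_pos _).le
      _ = ((m:ℝ)/β)^m := by rw [mul_assoc, ← Real.exp_add]; simp
      _ ≤ 1 + ((m:ℝ)/β)^m := by linarith

lemma chain_bound {Q : Set (Eu n)} (hQ : Convex ℝ Q) (f : Eu n → ℝ) (τ B : ℝ)
    (hτ : 0 < τ) (hB : 0 ≤ B)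
    (hstep : ∀ y ∈ Q, ∀ y' ∈ Q, dist y y' < τ → |f y - f y'| ≤ B) :
    ∀ k : ℕ, ∀ y ∈ Q, ∀ y' ∈ Q, dist y y' ≤ k * (τ / 2) → |f y - f y'| ≤ k * B := by
  intro k
  induction k with
  | zero =>
    intro y hy y' hy' hd
    simp only [Nat.cast_zero, zero_mul] at hd ⊢
    have : y = y' := by
      have h2 := dist_nonneg (x := y) (y := y')
      have : dist y y' = 0 := le_antisymm hd h2
      exact dist_eq_zero.mp this
    simp [this]
  | succ k ih =>
    intro y hy y' hy' hd
    rcases le_or_gt (dist y y') ((k:ℝ) * (τ/2)) with h | h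
    · calc |f y - f y'| ≤ k * B := ih y hy y' hy' h
        _ ≤ ((k:ℕ)+1:ℕ) * B := by
            push_cast
            nlinarith
    · set s : ℝ := (k:ℝ)/(k+1) with hs
      have hs0 : 0 ≤ s := by positivity
      have hs1 : s ≤ 1 := by
        rw [hs, div_le_one (by positivity)]; linarith
      set z : Eu n := (1 - s) • y + s • y' with hz
      have hzQ : z ∈ Q := hQ hy hy' (by linarith) hs0 (by ring)
      have hdyz : dist y z = s * dist y y' := by
        have : y - z = s • (y - y') := by
          rw [hz]; module
        rw [dist_eq_norm, this, norm_smul, Real.norm_eq_abs, abs_of_nonneg hs0,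
          ← dist_eq_norm]
      have hdzy' : dist z y' = (1 - s) * dist y y' := by
        have : z - y' = (1 - s) • (y - y') := by
          rw [hz]; module
        rw [dist_eq_norm, this, norm_smul, Real.norm_eq_abs,
          abs_of_nonneg (by linarith : (0:ℝ) ≤ 1 - s), ← dist_eq_norm]
      have h1s : (1 - s) = 1/((k:ℝ)+1) := by
        rw [hs]; field_simp; ring
      have hk1 : (0:ℝ) < (k:ℝ) + 1 := by positivity
      have hb1 : dist y z ≤ (k:ℝ) * (τ/2) := by
        rw [hdyz, hs]
        rw [div_mul_eq_mul_div, div_le_iff₀ hk1]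
        calc (k:ℝ) * dist y y' ≤ (k:ℝ) * (((k:ℝ)+1) * (τ/2)) := by
              apply mul_le_mul_of_nonneg_left _ (Nat.cast_nonneg k)
              calc dist y y' ≤ ((k:ℕ)+1 : ℕ) * (τ/2) := by exact_mod_cast hd
                _ = ((k:ℝ)+1) * (τ/2) := by push_cast; ring
          _ = (k:ℝ) * (τ/2) * ((k:ℝ)+1) := by ring
      have hb2 : dist z y' < τ := by
        rw [hdzy', h1s]
        calc 1/((k:ℝ)+1) * dist y y' ≤ 1/((k:ℝ)+1) * (((k:ℝ)+1) * (τ/2)) := by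
              apply mul_le_mul_of_nonneg_left _ (by positivity)
              calc dist y y' ≤ ((k:ℕ)+1 : ℕ) * (τ/2) := by exact_mod_cast hd
                _ = ((k:ℝ)+1) * (τ/2) := by push_cast; ring
          _ = τ/2 := by field_simp
          _ < τ := by linarith
      calc |f y - f y'| = |(f y - f z) + (f z - f y')| := by ring_nf
        _ ≤ |f y - f z| + |f z - f y'| := abs_add_le _ _
        _ ≤ (k:ℝ) * B + B := add_le_add (ih y hy z hzQ hb1) (hstep z hzQ y' hy' hb2)
        _ = ((k:ℕ)+1 : ℕ) * B := by push_cast; ring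

lemma integral_bound_via (f g : Eu n → ℝ) (S : ℝ)
    (hfg : ∀ y, ‖f y‖ ≤ S * |g y|) :
    ENNReal.ofReal |∫ y, f y| ≤ ENNReal.ofReal S * ∫⁻ y, ENNReal.ofReal |g y| := by
  have h1 : |∫ y, f y| ≤ (∫⁻ y, ENNReal.ofReal ‖f y‖).toReal := by
    rw [← Real.norm_eq_abs]
    exact norm_integral_le_lintegral_norm f
  calc ENNReal.ofReal |∫ y, f y| ≤ ENNReal.ofReal ((∫⁻ y, ENNReal.ofReal ‖f y‖).toReal) :=
        ENNReal.ofReal_le_ofReal h1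
    _ ≤ ∫⁻ y, ENNReal.ofReal ‖f y‖ := ENNReal.ofReal_toReal_le
    _ ≤ ∫⁻ y, ENNReal.ofReal S * ENNReal.ofReal |g y| := by
        apply lintegral_mono
        intro y
        show ENNReal.ofReal ‖f y‖ ≤ ENNReal.ofReal S * ENNReal.ofReal |g y|
        rw [← ENNReal.ofReal_mul' (abs_nonneg _)]
        exact ENNReal.ofReal_le_ofReal (hfg y)
    _ = ENNReal.ofReal S * ∫⁻ y, ENNReal.ofReal |g y| :=
        lintegral_const_mul' _ _ ENNReal.ofReal_ne_top

lemma holder_continuous (g : Eu n → ℝ) (τ P δ : ℝ) (hτ : 0 < τ) (hP : 0 ≤ P) (hδ : 0 < δ)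
    (h : ∀ y y' : Eu n, dist y y' < τ → |g y - g y'| ≤ P * (dist y y' / τ) ^ δ) :
    Continuous g := by
  rw [Metric.continuous_iff]
  intro b ε hε
  have hP1 : (0:ℝ) < P + 1 := by linarith
  set σ : ℝ := min 1 ((ε / (P + 1)) ^ (1/δ)) with hσdef
  have hσ0 : 0 < σ := lt_min one_pos (Real.rpow_pos_of_pos (by positivity) _)
  refine ⟨(τ/2) * σ, by positivity, ?_⟩
  intro y hy
  have hlt : dist y b < τ := by
    have : (τ/2) * σ ≤ τ/2 := by
      nlinarith [min_le_left (1:ℝ) ((ε / (P + 1)) ^ (1/δ))]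
    linarith
  have h1 : |g y - g b| ≤ P * (dist y b / τ) ^ δ := h y b hlt
  have h2 : (dist y b / τ) ^ δ ≤ ε / (P + 1) := by
    have hd0 : 0 ≤ dist y b := dist_nonneg
    have e1 : dist y b / τ ≤ σ := by
      rw [div_le_iff₀ hτ]
      calc dist y b ≤ (τ/2) * σ := hy.le
        _ ≤ σ * τ := by nlinarith
    calc (dist y b / τ) ^ δ ≤ σ ^ δ := Real.rpow_le_rpow (by positivity) e1 hδ.le
      _ ≤ ((ε / (P + 1)) ^ (1/δ)) ^ δ :=
          Real.rpow_le_rpow hσ0.le (min_le_right _ _) hδ.le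
      _ = ε / (P + 1) := by
          rw [← Real.rpow_mul (by positivity)]
          rw [one_div, inv_mul_cancel₀ hδ.ne']
          exact Real.rpow_one _
  rw [Real.dist_eq]
  calc |g y - g b| ≤ P * (ε / (P+1)) := by
        calc |g y - g b| ≤ P * (dist y b / τ) ^ δ := h1
          _ ≤ P * (ε / (P + 1)) := mul_le_mul_of_nonneg_left h2 hP
    _ < ε := by
        rw [mul_div_assoc']
        rw [div_lt_iff₀ hP1]
        nlinarith

lemma master_S_bound (ν δ M c₂ : ℝ) (hν : 0 ≤ ν) (hδ : 0 < δ) (hM : 0 ≤ M) (hc₂ : 0 < c₂) :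
    ∃ A : ℝ, 0 < A ∧ ∀ R ρc d τ : ℝ, 0 < R → 0 < ρc → 0 < d → 0 < τ →
      (R/τ)^δ * (1 + d/τ) * (τ^2)^(-ν/2) * (1 + τ/ρc)^(-M) * Real.exp (-(c₂*d^2)/τ^2)
        ≤ A * (R^δ * (d^(-(ν+δ)) * (ρc/d)^M)) := by
  obtain ⟨A₁, hA₁0, hA₁⟩ := poly_exp_sq (ν+δ+M) c₂ (by positivity) hc₂
  obtain ⟨A₂, hA₂0, hA₂⟩ := poly_exp_sq (ν+δ+M+1) c₂ (by positivity) hc₂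
  refine ⟨A₁+A₂, by positivity, ?_⟩
  intro R ρc d τ hR hρc hd hτ
  have hv : 0 < d/τ := by positivity
  have i1 : (τ^2)^(-ν/2) = τ^(-ν) := by
    rw [← Real.rpow_natCast τ 2, ← Real.rpow_mul hτ.le]
    rw [show ((2:ℕ):ℝ) * (-ν/2) = -ν by push_cast; ring]
  have i2 : Real.exp (-(c₂*d^2)/τ^2) = Real.exp (-(c₂*(d/τ)^2)) := by
    congr 1
    field_simp
  have i3 : (R/τ)^δ = R^δ * τ^(-δ) := by
    rw [Real.div_rpow hR.le hτ.le, Real.rpow_neg hτ.le, div_eq_mul_inv]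
  have i4 : (1+τ/ρc)^(-M) ≤ ρc^M * τ^(-M) := by
    calc (1+τ/ρc)^(-M) ≤ (τ/ρc)^(-M) := one_add_rpow_neg_le (by positivity) hM
      _ = ρc^M * τ^(-M) := by
          rw [Real.rpow_neg (by positivity), Real.div_rpow hτ.le hρc.le, inv_div,
            div_eq_mul_inv, Real.rpow_neg hτ.le]
  have key_id : R^δ * τ^(-δ) * τ^(-ν) * (ρc^M * τ^(-M))
      = (R^δ * (d^(-(ν+δ)) * (ρc/d)^M)) * (d/τ)^(ν+δ+M) := by
    have e1 : τ^(-δ) * τ^(-ν) * τ^(-M) = τ^(-(ν+δ+M)) := by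
      rw [← Real.rpow_add hτ, ← Real.rpow_add hτ]
      congr 1
      ring
    have e2 : τ^(-(ν+δ+M)) = d^(-(ν+δ+M)) * (d/τ)^(ν+δ+M) := by
      have hds : d ^ (ν+δ+M) ≠ 0 := (Real.rpow_pos_of_pos hd _).ne'
      rw [Real.div_rpow hd.le hτ.le, Real.rpow_neg hd.le, Real.rpow_neg hτ.le]
      field_simp
    have e3 : d^(-(ν+δ+M)) = d^(-(ν+δ)) * d^(-M) := by
      rw [← Real.rpow_add hd]
      congr 1
      ring
    have e4 : ρc^M * d^(-M) = (ρc/d)^M := by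
      rw [Real.div_rpow hρc.le hd.le, Real.rpow_neg hd.le, div_eq_mul_inv]
    calc R^δ * τ^(-δ) * τ^(-ν) * (ρc^M * τ^(-M))
        = R^δ * ρc^M * (τ^(-δ) * τ^(-ν) * τ^(-M)) := by ring
      _ = R^δ * ρc^M * (d^(-(ν+δ)) * d^(-M) * (d/τ)^(ν+δ+M)) := by rw [e1, e2, e3]
      _ = (R^δ * (d^(-(ν+δ)) * (ρc^M * d^(-M)))) * (d/τ)^(ν+δ+M) := by ring
      _ = _ := by rw [e4]
  have hbr : (1 + d/τ) * ((d/τ)^(ν+δ+M) * Real.exp (-(c₂*(d/τ)^2))) ≤ A₁ + A₂ := by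
    have b1 := hA₁ (d/τ) hv
    have b2 := hA₂ (d/τ) hv
    have e5 : (d/τ)^(ν+δ+M+1) = (d/τ)^(ν+δ+M) * (d/τ) := by
      rw [Real.rpow_add_one hv.ne']
    calc (1 + d/τ) * ((d/τ)^(ν+δ+M) * Real.exp (-(c₂*(d/τ)^2)))
        = (d/τ)^(ν+δ+M) * Real.exp (-(c₂*(d/τ)^2))
          + ((d/τ)^(ν+δ+M) * (d/τ)) * Real.exp (-(c₂*(d/τ)^2)) := by ring
      _ = (d/τ)^(ν+δ+M) * Real.exp (-(c₂*(d/τ)^2))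
          + (d/τ)^(ν+δ+M+1) * Real.exp (-(c₂*(d/τ)^2)) := by rw [e5]
      _ ≤ A₁ + A₂ := add_le_add b1 b2
  calc (R/τ)^δ * (1 + d/τ) * (τ^2)^(-ν/2) * (1 + τ/ρc)^(-M) * Real.exp (-(c₂*d^2)/τ^2)
      ≤ (R/τ)^δ * (1 + d/τ) * (τ^2)^(-ν/2) * (ρc^M * τ^(-M)) * Real.exp (-(c₂*d^2)/τ^2) := by
        apply mul_le_mul _ le_rfl (Real.exp_pos _).le (by positivity)
        exact mul_le_mul_of_nonneg_left i4 (by positivity)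
    _ = (R^δ * (d^(-(ν+δ)) * (ρc/d)^M))
          * ((1 + d/τ) * ((d/τ)^(ν+δ+M) * Real.exp (-(c₂*(d/τ)^2)))) := by
        rw [i1, i2, i3]
        linear_combination ((1 + d/τ) * Real.exp (-(c₂*(d/τ)^2))) * key_id
    _ ≤ (R^δ * (d^(-(ν+δ)) * (ρc/d)^M)) * (A₁+A₂) :=
        mul_le_mul_of_nonneg_left hbr (by positivity)
    _ = (A₁+A₂) * (R^δ * (d^(-(ν+δ)) * (ρc/d)^M)) := by ring

/-- Lemma 7.7: pointwise decay of `T*a` away from the supporting cube,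
for kernels with the decay and Hölder regularity of the Schrödinger heat kernel. -/
theorem stmt17 (n : ℕ) (hn : 3 ≤ n) (ρ : Eu n → ℝ) (C₀ k₀ : ℝ)
    (hρ : IsCriticalRadius n ρ C₀ k₀)
    (ω : Eu n → ℝ) (hω : MemAInf ρ ω)
    (p : ℝ) (q : ℝ≥0∞) (s : ℕ)
    (hp0 : 0 < p) (hp1 : p ≤ 1)
    (hq : ENNReal.ofReal (qIndex ρ ω) < q)
    (hs : Int.floor ((n : ℝ) * (qIndex ρ ω / p - 1)) ≤ (s : ℤ))
    (T : ℝ → Eu n → Eu n → ℝ)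
    (hTpos : ∀ (t : ℝ) (x y : Eu n), 0 < t → 0 ≤ T t x y)
    (hTdecay : ∀ l : ℝ, 0 < l → ∃ C > (0 : ℝ),
      ∀ (t : ℝ) (x y : Eu n), 0 < t → x ≠ y →
        T t x y ≤ C * (1 + dist x y / ρ y) ^ (-l) * dist x y ^ (-(n : ℝ)))
    (δ c : ℝ) (hδ : 0 < δ) (hc : 0 < c)
    (hTholder : ∀ M : ℝ, 0 < M → ∃ C > (0 : ℝ),
      ∀ (t : ℝ) (x y y' : Eu n), 0 < t → dist y y' < Real.sqrt t →
        |T t x y - T t x y'| ≤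
          C * (dist y y' / Real.sqrt t) ^ δ * t ^ (-(n : ℝ) / 2) *
            (1 + Real.sqrt t / ρ y) ^ (-M) * Real.exp (-c * dist x y ^ 2 / t)) :
    ∀ M : ℝ, 0 < M → ∃ C > (0 : ℝ),
      ∀ (a : Eu n → ℝ) (x₀ : Eu n) (r : ℝ), IsLocAtom ρ C₀ k₀ ω p q s a x₀ r →
        ∀ x : Eu n, x ∉ cube x₀ (4 * r) →
          ((L2const n C₀ k₀ * ρ x₀ ≤ r →
              TstarK T a x ≤
                ENNReal.ofReal C * (∫⁻ y, ENNReal.ofReal |a y|) *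
                  ENNReal.ofReal (r ^ M * dist x x₀ ^ (-((n : ℝ) + M)))) ∧
          (r < L2const n C₀ k₀ * ρ x₀ → dist x x₀ ≤ 2 * ρ x₀ →
              TstarK T a x ≤
                ENNReal.ofReal C * (∫⁻ y, ENNReal.ofReal |a y|) *
                  ENNReal.ofReal (r ^ δ * dist x x₀ ^ (-((n : ℝ) + δ)))) ∧
          (r < L2const n C₀ k₀ * ρ x₀ → ρ x₀ / Real.sqrt n ≤ dist x x₀ →
              TstarK T a x ≤
                ENNReal.ofReal C * (∫⁻ y, ENNReal.ofReal |a y|) *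
                  ENNReal.ofReal
                    (r ^ δ * dist x x₀ ^ (-((n : ℝ) + δ)) *
                      (ρ x₀ / dist x x₀) ^ M))) := by
  intro M hM
  obtain ⟨Cd, hCd, hTd⟩ := hTdecay M hM
  obtain ⟨CM, hCM, hTh⟩ := hTholder M hM
  obtain ⟨hρcont, hρpos, hC₀, hk₀, hρest⟩ := hρ
  have hC₀0 : (0:ℝ) < C₀ := by linarith
  have hn3 : (3:ℝ) ≤ (n:ℝ) := by exact_mod_cast hn
  have hsn : 0 < Real.sqrt n := Real.sqrt_pos.2 (by linarith)
  have hsn1 : 1 ≤ Real.sqrt n := by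
    rw [show (1:ℝ) = Real.sqrt 1 by simp]
    exact Real.sqrt_le_sqrt (by linarith)
  have hL1 : 0 < L1const n C₀ k₀ := by
    unfold L1const
    positivity
  have hL2 : 0 < L2const n C₀ k₀ := by
    unfold L2const
    positivity
  set c₁ : ℝ := (1 + Real.sqrt n / 3)⁻¹ with hc₁def
  have hc₁ : 0 < c₁ := by positivity
  set c₂ : ℝ := c * c₁^2 with hc₂def
  have hc₂ : 0 < c₂ := by positivity
  set C₄ : ℝ := C₀ * (1 + Real.sqrt n * L1const n C₀ k₀ / 2) ^ (k₀/(k₀+1)) with hC₄def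
  have hC₄ : 0 < C₄ := by positivity
  obtain ⟨A2, hA2, hA2le⟩ := master_S_bound (n:ℝ) δ 0 c₂ (by positivity) hδ le_rfl hc₂
  obtain ⟨A3, hA3, hA3le⟩ := master_S_bound (n:ℝ) δ M c₂ (by positivity) hδ hM.le hc₂
  set K₁ : ℝ := Cd * (C₄ / L2const n C₀ k₀) ^ M * c₁ ^ (-((n:ℝ)+M)) with hK₁def
  set K₂ : ℝ := 3 * CM * Real.sqrt n * A2 * (Real.sqrt n)^δ with hK₂def
  set K₃ : ℝ := 3 * CM * Real.sqrt n * A3 * (Real.sqrt n)^δ * C₄^M with hK₃def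
  have hK₁pos : 0 < K₁ := by rw [hK₁def]; positivity
  have hK₂pos : 0 < K₂ := by rw [hK₂def]; positivity
  have hK₃pos : 0 < K₃ := by rw [hK₃def]; positivity
  have hCpos : 0 < K₁ + K₂ + K₃ := by positivity
  refine ⟨K₁ + K₂ + K₃, hCpos, ?_⟩
  intro a x₀ r ha x hx
  obtain ⟨hr0, hrL1, hsupp, -, hmom⟩ := ha
  set d := dist x x₀ with hddef
  have hρ₀ : 0 < ρ x₀ := hρpos x₀
  obtain ⟨i, hi⟩ : ∃ i, 2*r < |x i - x₀ i| := by
    by_contra h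
    push_neg at h
    exact hx (fun i => by have := h i; have : |x i - x₀ i| ≤ 4*r/2 := by linarith
                          exact this)
  have hd2r : 2*r < d := lt_of_lt_of_le hi (coord_le_dist x x₀ i)
  have hd0 : 0 < d := by linarith
  have hx₀cube : x₀ ∈ cube x₀ r := by
    intro j
    simp only [sub_self, abs_zero]
    positivity
  have hcube_d : ∀ y ∈ cube x₀ r, dist y x₀ ≤ Real.sqrt n * (r/2) :=
    fun y hy => dist_le_of_mem_cube hr0.le hy
  have hfar : ∀ y ∈ cube x₀ r, c₁ * d ≤ dist x y ∧ 3*r/2 ≤ dist x y := by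
    intro y hy
    have h1 : |x i - y i| ≤ dist x y := coord_le_dist x y i
    have h2 : |y i - x₀ i| ≤ r/2 := hy i
    have h3 : 3*r/2 ≤ dist x y := by
      have habs : |x i - x₀ i| ≤ |x i - y i| + |y i - x₀ i| := by
        have h4 := abs_add_le (x i - y i) (y i - x₀ i)
        have h5 : (x i - y i) + (y i - x₀ i) = x i - x₀ i := by ring
        rw [h5] at h4
        exact h4
      linarith
    refine ⟨?_, h3⟩
    have h4 : d ≤ dist x y + dist y x₀ := dist_triangle x y x₀
    have h5 : dist y x₀ ≤ Real.sqrt n * (r/2) := hcube_d y hy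
    have h6 : r ≤ (2/3)*dist x y := by linarith
    have h7 : d ≤ (1 + Real.sqrt n/3) * dist x y := by nlinarith
    have hpos : (0:ℝ) < 1 + Real.sqrt n/3 := by positivity
    have hc₁inv : c₁ * (1 + Real.sqrt n/3) = 1 := by
      rw [hc₁def]
      exact inv_mul_cancel₀ hpos.ne'
    calc c₁ * d ≤ c₁ * ((1 + Real.sqrt n/3) * dist x y) :=
          mul_le_mul_of_nonneg_left h7 hc₁.le
      _ = dist x y := by rw [← mul_assoc, hc₁inv, one_mul]
  have hρy : ∀ y ∈ cube x₀ r, ρ y ≤ C₄ * ρ x₀ := by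
    intro y hy
    have h1 := (hρest x₀ y).2
    have h2 : dist x₀ y / ρ x₀ ≤ Real.sqrt n * L1const n C₀ k₀ / 2 := by
      rw [div_le_iff₀ hρ₀]
      calc dist x₀ y = dist y x₀ := dist_comm _ _
        _ ≤ Real.sqrt n * (r/2) := hcube_d y hy
        _ ≤ Real.sqrt n * (L1const n C₀ k₀ * ρ x₀ / 2) := by
            apply mul_le_mul_of_nonneg_left _ hsn.le
            linarith
        _ = Real.sqrt n * L1const n C₀ k₀ / 2 * ρ x₀ := by ring
    have h3 : (1 + dist x₀ y / ρ x₀) ^ (k₀/(k₀+1))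
        ≤ (1 + Real.sqrt n * L1const n C₀ k₀ / 2) ^ (k₀/(k₀+1)) := by
      apply Real.rpow_le_rpow (by positivity) (by linarith) (by positivity)
    calc ρ y ≤ C₀ * ρ x₀ * (1 + dist x₀ y / ρ x₀) ^ (k₀/(k₀+1)) := h1
      _ ≤ C₀ * ρ x₀ * (1 + Real.sqrt n * L1const n C₀ k₀ / 2) ^ (k₀/(k₀+1)) :=
          mul_le_mul_of_nonneg_left h3 (by positivity)
      _ = C₄ * ρ x₀ := by rw [hC₄def]; ring
  -- the oscillation step bound
  have hstep : ∀ t, 0 < t → ∀ y ∈ cube x₀ r, ∀ y' ∈ cube x₀ r, dist y y' < Real.sqrt t →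
      |T t x y - T t x y'| ≤ CM * (dist y y' / Real.sqrt t)^δ *
        (t^(-(n:ℝ)/2) * (1 + Real.sqrt t/(C₄*ρ x₀))^(-M) * Real.exp (-(c₂*d^2)/t)) := by
    intro t ht y hy y' hy' hdd
    have h0 := hTh t x y y' ht hdd
    have hρyp := hρpos y
    have hτ0 : (0:ℝ) ≤ Real.sqrt t := Real.sqrt_nonneg t
    have h1 : (1 + Real.sqrt t / ρ y)^(-M) ≤ (1 + Real.sqrt t/(C₄*ρ x₀))^(-M) := by
      apply rpow_neg_anti (by positivity) _ hM.le
      have hles : Real.sqrt t/(C₄*ρ x₀) ≤ Real.sqrt t / ρ y := by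
        rw [div_le_div_iff₀ (by positivity) hρyp]
        exact mul_le_mul_of_nonneg_left (hρy y hy) hτ0
      linarith
    have h2 : Real.exp (-c * dist x y ^ 2 / t) ≤ Real.exp (-(c₂*d^2)/t) := by
      apply Real.exp_le_exp.2
      rw [div_le_div_iff₀ ht ht]
      have hsq : (c₁*d)^2 ≤ dist x y ^2 := by
        apply pow_le_pow_left₀ (by positivity) (hfar y hy).1
      have e : c₂ * d^2 = c * (c₁*d)^2 := by rw [hc₂def]; ring
      have X : c * (c₁*d)^2 ≤ c * dist x y ^2 := mul_le_mul_of_nonneg_left hsq hc.le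
      have X2 : c * (c₁*d)^2 * t ≤ c * dist x y ^2 * t := mul_le_mul_of_nonneg_right X ht.le
      have e2 : -(c₂ * d^2) * t = -(c * (c₁*d)^2) * t := by rw [e]
      rw [e2]
      linarith
    calc |T t x y - T t x y'|
        ≤ CM * (dist y y' / Real.sqrt t)^δ * t^(-(n:ℝ)/2) * (1 + Real.sqrt t/ρ y)^(-M) *
            Real.exp (-c * dist x y ^ 2 / t) := h0
      _ ≤ CM * (dist y y' / Real.sqrt t)^δ * t^(-(n:ℝ)/2) * (1 + Real.sqrt t/(C₄*ρ x₀))^(-M) *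
            Real.exp (-(c₂*d^2)/t) := by
          apply mul_le_mul _ h2 (Real.exp_pos _).le (by positivity)
          exact mul_le_mul_of_nonneg_left h1 (by positivity)
      _ = CM * (dist y y' / Real.sqrt t)^δ *
            (t^(-(n:ℝ)/2) * (1 + Real.sqrt t/(C₄*ρ x₀))^(-M) * Real.exp (-(c₂*d^2)/t)) := by
          ring
  -- the full oscillation bound over the cube
  have claim_osc : ∀ t, 0 < t → ∀ y ∈ cube x₀ r, ∀ y' ∈ cube x₀ r,
      |T t x y - T t x y'| ≤ 3 * CM * ((Real.sqrt n * r)/Real.sqrt t)^δ *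
        (1 + Real.sqrt n * d / Real.sqrt t) *
        (t^(-(n:ℝ)/2) * (1 + Real.sqrt t/(C₄*ρ x₀))^(-M) * Real.exp (-(c₂*d^2)/t)) := by
    intro t ht y hy y' hy'
    have hτ : 0 < Real.sqrt t := Real.sqrt_pos.2 ht
    set G : ℝ := t^(-(n:ℝ)/2) * (1 + Real.sqrt t/(C₄*ρ x₀))^(-M) * Real.exp (-(c₂*d^2)/t)
      with hGdef
    have hG0 : 0 ≤ G := by rw [hGdef]; positivity
    have hD : dist y y' ≤ Real.sqrt n * r := by
      calc dist y y' ≤ dist y x₀ + dist x₀ y' := dist_triangle _ _ _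
        _ ≤ Real.sqrt n * (r/2) + Real.sqrt n * (r/2) := by
            apply add_le_add (hcube_d y hy)
            rw [dist_comm]
            exact hcube_d y' hy'
        _ = Real.sqrt n * r := by ring
    have hrd : Real.sqrt n * r ≤ Real.sqrt n * d := by nlinarith
    rcases lt_or_ge (dist y y') (Real.sqrt t) with hcase1 | hcase1
    · have h1 := hstep t ht y hy y' hy' hcase1
      have h2 : (dist y y'/Real.sqrt t)^δ ≤ ((Real.sqrt n * r)/Real.sqrt t)^δ := by
        apply Real.rpow_le_rpow (by positivity) _ hδ.le
        gcongr
      have hw : 0 ≤ Real.sqrt n * d / Real.sqrt t := by positivity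
      have hB0 : 0 ≤ CM * ((Real.sqrt n * r)/Real.sqrt t)^δ * G := by positivity
      calc |T t x y - T t x y'| ≤ CM * (dist y y'/Real.sqrt t)^δ * G := h1
        _ ≤ CM * ((Real.sqrt n * r)/Real.sqrt t)^δ * G := by
            apply mul_le_mul_of_nonneg_right _ hG0
            exact mul_le_mul_of_nonneg_left h2 hCM.le
        _ ≤ 3 * CM * ((Real.sqrt n * r)/Real.sqrt t)^δ * (1 + Real.sqrt n * d / Real.sqrt t)
              * G := by nlinarith [mul_nonneg hB0 hw]
    · have hDpos : 0 < dist y y' := lt_of_lt_of_le hτ hcase1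
      set k := ⌈2*dist y y'/Real.sqrt t⌉₊ with hkdef
      have hk1 : dist y y' ≤ k * (Real.sqrt t/2) := by
        have h1 := Nat.le_ceil (2*dist y y'/Real.sqrt t)
        rw [div_le_iff₀ hτ] at h1
        rw [← hkdef] at h1
        linarith
      have hstep' : ∀ z ∈ cube x₀ r, ∀ z' ∈ cube x₀ r, dist z z' < Real.sqrt t →
          |T t x z - T t x z'| ≤ CM * G := by
        intro z hz z' hz' hzz
        have h1 := hstep t ht z hz z' hz' hzz
        have h2 : (dist z z'/Real.sqrt t)^δ ≤ 1 := by
          apply Real.rpow_le_one (by positivity) _ hδ.le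
          rw [div_le_one hτ]
          exact hzz.le
        calc |T t x z - T t x z'| ≤ CM * (dist z z'/Real.sqrt t)^δ * G := h1
          _ ≤ CM * 1 * G := by
              apply mul_le_mul_of_nonneg_right _ hG0
              exact mul_le_mul_of_nonneg_left h2 hCM.le
          _ = CM * G := by ring
      have hchain := chain_bound (cube_convex x₀ r) (fun z => T t x z) (Real.sqrt t)
        (CM * G) hτ (by positivity) hstep' k y hy y' hy' hk1
      have hkup : (k:ℝ) ≤ 3*(dist y y')/Real.sqrt t := by
        have h1 : (k:ℝ) < 2*dist y y'/Real.sqrt t + 1 := by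
          rw [hkdef]
          exact Nat.ceil_lt_add_one (by positivity)
        have h2 : (1:ℝ) ≤ dist y y'/Real.sqrt t := (one_le_div hτ).2 hcase1
        calc (k:ℝ) ≤ 2*dist y y'/Real.sqrt t + 1 := h1.le
          _ ≤ 2*dist y y'/Real.sqrt t + dist y y'/Real.sqrt t := by linarith
          _ = 3*(dist y y')/Real.sqrt t := by ring
      have hmain : |T t x y - T t x y'| ≤ 3*(dist y y'/Real.sqrt t)*(CM*G) := by
        calc |T t x y - T t x y'| ≤ (k:ℝ)*(CM*G) := hchain
          _ ≤ (3*(dist y y')/Real.sqrt t)*(CM*G) :=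
              mul_le_mul_of_nonneg_right hkup (by positivity)
          _ = 3*(dist y y'/Real.sqrt t)*(CM*G) := by ring
      have h2 : (1:ℝ) ≤ dist y y'/Real.sqrt t := (one_le_div hτ).2 hcase1
      have hfin : dist y y'/Real.sqrt t ≤
          ((Real.sqrt n * r)/Real.sqrt t)^δ * (1 + Real.sqrt n * d/Real.sqrt t) := by
        have hone : (1:ℝ) ≤ 1 + Real.sqrt n * d/Real.sqrt t := by
          have : 0 ≤ Real.sqrt n * d/Real.sqrt t := by positivity
          linarith
        rcases le_or_gt 1 δ with hδ1 | hδ1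
        · calc dist y y'/Real.sqrt t = (dist y y'/Real.sqrt t)^(1:ℝ) :=
              (Real.rpow_one _).symm
            _ ≤ (dist y y'/Real.sqrt t)^δ := Real.rpow_le_rpow_of_exponent_le h2 hδ1
            _ ≤ ((Real.sqrt n * r)/Real.sqrt t)^δ := by
                apply Real.rpow_le_rpow (by positivity) _ hδ.le
                gcongr
            _ ≤ ((Real.sqrt n * r)/Real.sqrt t)^δ * (1 + Real.sqrt n * d/Real.sqrt t) :=
                le_mul_of_one_le_right (by positivity) hone
        · have hsplit : dist y y'/Real.sqrt t
              = (dist y y'/Real.sqrt t)^δ * (dist y y'/Real.sqrt t)^(1-δ) := by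
            rw [← Real.rpow_add (by positivity), show δ + (1-δ) = 1 by ring, Real.rpow_one]
          rw [hsplit]
          apply mul_le_mul
          · apply Real.rpow_le_rpow (by positivity) _ hδ.le
            gcongr
          · calc (dist y y'/Real.sqrt t)^(1-δ)
                ≤ ((Real.sqrt n * d)/Real.sqrt t)^(1-δ) := by
                  apply Real.rpow_le_rpow (by positivity) _ (by linarith)
                  gcongr
                  exact hD.trans hrd
              _ ≤ 1 + (Real.sqrt n * d)/Real.sqrt t :=
                  rpow_le_one_add (by positivity) (by linarith) (by linarith)
              _ = 1 + Real.sqrt n * d/Real.sqrt t := by ring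
          · positivity
          · positivity
      calc |T t x y - T t x y'| ≤ 3*(dist y y'/Real.sqrt t)*(CM*G) := hmain
        _ ≤ 3*(((Real.sqrt n * r)/Real.sqrt t)^δ * (1 + Real.sqrt n * d/Real.sqrt t))*(CM*G) := by
            apply mul_le_mul_of_nonneg_right _ (by positivity)
            exact mul_le_mul_of_nonneg_left hfin (by norm_num)
        _ = 3 * CM * ((Real.sqrt n * r)/Real.sqrt t)^δ * (1 + Real.sqrt n * d / Real.sqrt t)
              * G := by ring
  -- sup-in-t bounds on the oscillation quantity
  have claim2 : ∀ t, 0 < t →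
      3 * CM * ((Real.sqrt n * r)/Real.sqrt t)^δ * (1 + Real.sqrt n * d / Real.sqrt t) *
        (t^(-(n:ℝ)/2) * (1 + Real.sqrt t/(C₄*ρ x₀))^(-M) * Real.exp (-(c₂*d^2)/t))
      ≤ K₂ * (r^δ * d^(-((n:ℝ)+δ))) := by
    intro t ht
    have hτ : 0 < Real.sqrt t := Real.sqrt_pos.2 ht
    have ht2 : Real.sqrt t ^ 2 = t := Real.sq_sqrt ht.le
    have hML : (1 + Real.sqrt t/(C₄*ρ x₀))^(-M) ≤ (1 + Real.sqrt t/(C₄*ρ x₀))^(-(0:ℝ)) := by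
      rw [neg_zero, Real.rpow_zero]
      apply Real.rpow_le_one_of_one_le_of_nonpos _ (by linarith)
      have : 0 ≤ Real.sqrt t/(C₄*ρ x₀) := by positivity
      linarith
    have hone : 1 + Real.sqrt n * d / Real.sqrt t ≤ Real.sqrt n * (1 + d/Real.sqrt t) := by
      have he : Real.sqrt n * (1 + d/Real.sqrt t) = Real.sqrt n + Real.sqrt n * d/Real.sqrt t := by
        ring
      rw [he]
      linarith
    have happ := hA2le (Real.sqrt n * r) (C₄ * ρ x₀) d (Real.sqrt t)
      (by positivity) (by positivity) hd0 hτ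
    rw [ht2] at happ
    calc 3 * CM * ((Real.sqrt n * r)/Real.sqrt t)^δ * (1 + Real.sqrt n * d / Real.sqrt t) *
        (t^(-(n:ℝ)/2) * (1 + Real.sqrt t/(C₄*ρ x₀))^(-M) * Real.exp (-(c₂*d^2)/t))
        ≤ 3 * CM * ((Real.sqrt n * r)/Real.sqrt t)^δ * (Real.sqrt n * (1 + d/Real.sqrt t)) *
          (t^(-(n:ℝ)/2) * (1 + Real.sqrt t/(C₄*ρ x₀))^(-(0:ℝ)) * Real.exp (-(c₂*d^2)/t)) := by
          apply mul_le_mul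
          · exact mul_le_mul_of_nonneg_left hone (by positivity)
          · apply mul_le_mul_of_nonneg_right _ (Real.exp_pos _).le
            exact mul_le_mul_of_nonneg_left hML (by positivity)
          · positivity
          · positivity
      _ = 3 * CM * Real.sqrt n *
          (((Real.sqrt n * r)/Real.sqrt t)^δ * (1 + d/Real.sqrt t) * t^(-(n:ℝ)/2) *
            (1 + Real.sqrt t/(C₄*ρ x₀))^(-(0:ℝ)) * Real.exp (-(c₂*d^2)/t)) := by ring
      _ ≤ 3 * CM * Real.sqrt n *
          (A2 * ((Real.sqrt n * r)^δ * (d^(-((n:ℝ)+δ)) * ((C₄*ρ x₀)/d)^(0:ℝ)))) := by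
          apply mul_le_mul_of_nonneg_left _ (by positivity)
          exact happ
      _ = K₂ * (r^δ * d^(-((n:ℝ)+δ))) := by
          rw [Real.rpow_zero, Real.mul_rpow hsn.le hr0.le, hK₂def]
          ring
  have claim3 : ∀ t, 0 < t →
      3 * CM * ((Real.sqrt n * r)/Real.sqrt t)^δ * (1 + Real.sqrt n * d / Real.sqrt t) *
        (t^(-(n:ℝ)/2) * (1 + Real.sqrt t/(C₄*ρ x₀))^(-M) * Real.exp (-(c₂*d^2)/t))
      ≤ K₃ * (r^δ * d^(-((n:ℝ)+δ)) * (ρ x₀/d)^M) := by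
    intro t ht
    have hτ : 0 < Real.sqrt t := Real.sqrt_pos.2 ht
    have ht2 : Real.sqrt t ^ 2 = t := Real.sq_sqrt ht.le
    have hone : 1 + Real.sqrt n * d / Real.sqrt t ≤ Real.sqrt n * (1 + d/Real.sqrt t) := by
      have he : Real.sqrt n * (1 + d/Real.sqrt t) = Real.sqrt n + Real.sqrt n * d/Real.sqrt t := by
        ring
      rw [he]
      linarith
    have happ := hA3le (Real.sqrt n * r) (C₄ * ρ x₀) d (Real.sqrt t)
      (by positivity) (by positivity) hd0 hτ
    rw [ht2] at happ
    have hC₄split : ((C₄*ρ x₀)/d)^M = C₄^M * (ρ x₀/d)^M := by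
      rw [show (C₄*ρ x₀)/d = C₄*(ρ x₀/d) by ring, Real.mul_rpow hC₄.le (by positivity)]
    calc 3 * CM * ((Real.sqrt n * r)/Real.sqrt t)^δ * (1 + Real.sqrt n * d / Real.sqrt t) *
        (t^(-(n:ℝ)/2) * (1 + Real.sqrt t/(C₄*ρ x₀))^(-M) * Real.exp (-(c₂*d^2)/t))
        ≤ 3 * CM * ((Real.sqrt n * r)/Real.sqrt t)^δ * (Real.sqrt n * (1 + d/Real.sqrt t)) *
          (t^(-(n:ℝ)/2) * (1 + Real.sqrt t/(C₄*ρ x₀))^(-M) * Real.exp (-(c₂*d^2)/t)) := by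
          apply mul_le_mul_of_nonneg_right _ (by positivity)
          exact mul_le_mul_of_nonneg_left hone (by positivity)
      _ = 3 * CM * Real.sqrt n *
          (((Real.sqrt n * r)/Real.sqrt t)^δ * (1 + d/Real.sqrt t) * t^(-(n:ℝ)/2) *
            (1 + Real.sqrt t/(C₄*ρ x₀))^(-M) * Real.exp (-(c₂*d^2)/t)) := by ring
      _ ≤ 3 * CM * Real.sqrt n *
          (A3 * ((Real.sqrt n * r)^δ * (d^(-((n:ℝ)+δ)) * ((C₄*ρ x₀)/d)^M))) := by
          apply mul_le_mul_of_nonneg_left _ (by positivity)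
          exact happ
      _ = K₃ * (r^δ * d^(-((n:ℝ)+δ)) * (ρ x₀/d)^M) := by
          rw [hC₄split, Real.mul_rpow hsn.le hr0.le, hK₃def]
          ring
  -- per-t key bound in the cancellation cases
  have key : ∀ t, 0 < t → r < L2const n C₀ k₀ * ρ x₀ →
      (∫⁻ y, ENNReal.ofReal |a y|) ≠ ⊤ →
      ENNReal.ofReal |∫ y, T t x y * a y| ≤
        ENNReal.ofReal (3 * CM * ((Real.sqrt n * r)/Real.sqrt t)^δ *
          (1 + Real.sqrt n * d / Real.sqrt t) *
          (t^(-(n:ℝ)/2) * (1 + Real.sqrt t/(C₄*ρ x₀))^(-M) * Real.exp (-(c₂*d^2)/t))) *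
        ∫⁻ y, ENNReal.ofReal |a y| := by
    intro t ht hc' hLfin
    by_cases hvan : ∃ z ∈ cube x₀ r, T t x z = 0
    · obtain ⟨z, hz, hTz⟩ := hvan
      apply integral_bound_via
      intro y
      rcases eq_or_ne (a y) 0 with hay | hay
      · simp [hay]
      · have hy : y ∈ cube x₀ r := hsupp (Function.mem_support.mpr hay)
        rw [norm_mul, Real.norm_eq_abs, Real.norm_eq_abs]
        apply mul_le_mul_of_nonneg_right _ (abs_nonneg _)
        have he : |T t x y| = |T t x y - T t x z| := by rw [hTz, sub_zero]
        rw [he]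
        exact claim_osc t ht y hy z hz
    · push_neg at hvan
      have hposT : ∀ y ∈ cube x₀ r, 0 < T t x y :=
        fun y hy => lt_of_le_of_ne (hTpos t x y ht) (Ne.symm (hvan y hy))
      by_cases hInt : Integrable (fun y => T t x y * a y) volume
      · have hτ : 0 < Real.sqrt t := Real.sqrt_pos.2 ht
        have hcont : Continuous (fun y => T t x y) := by
          apply holder_continuous _ (Real.sqrt t) (CM * t^(-(n:ℝ)/2)) δ hτ (by positivity) hδ
          intro y y' hyy'
          have h0 := hTh t x y y' ht hyy'
          have hρyp := hρpos y
          have h1 : (1 + Real.sqrt t/ρ y)^(-M) ≤ 1 := by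
            apply Real.rpow_le_one_of_one_le_of_nonpos _ (by linarith)
            have : 0 ≤ Real.sqrt t/ρ y := by positivity
            linarith
          have h2 : Real.exp (-c * dist x y ^ 2 / t) ≤ 1 := by
            rw [Real.exp_le_one_iff]
            apply div_nonpos_of_nonpos_of_nonneg _ ht.le
            nlinarith [sq_nonneg (dist x y)]
          calc |T t x y - T t x y'|
              ≤ CM * (dist y y' / Real.sqrt t)^δ * t^(-(n:ℝ)/2) * (1 + Real.sqrt t/ρ y)^(-M) *
                Real.exp (-c * dist x y ^ 2 / t) := h0
            _ ≤ CM * (dist y y' / Real.sqrt t)^δ * t^(-(n:ℝ)/2) * 1 * 1 := by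
                apply mul_le_mul _ h2 (Real.exp_pos _).le (by positivity)
                exact mul_le_mul_of_nonneg_left h1 (by positivity)
            _ = CM * t^(-(n:ℝ)/2) * (dist y y' / Real.sqrt t)^δ := by ring
        have haeq : a = fun y => (T t x y * a y) * (T t x y)⁻¹ := by
          funext y
          rcases eq_or_ne (a y) 0 with hay | hay
          · simp [hay]
          · have hy : y ∈ cube x₀ r := hsupp (Function.mem_support.mpr hay)
            rw [mul_comm (T t x y) (a y), mul_assoc, mul_inv_cancel₀ (hposT y hy).ne',
              mul_one]
        have haesm : AEStronglyMeasurable a volume := by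
          rw [haeq]
          exact hInt.aestronglyMeasurable.mul hcont.measurable.inv.aestronglyMeasurable
        have hafin : HasFiniteIntegral a volume := by
          rw [hasFiniteIntegral_iff_norm]
          have heq : (∫⁻ y, ENNReal.ofReal ‖a y‖) = ∫⁻ y, ENNReal.ofReal |a y| := by
            apply lintegral_congr
            intro y
            rw [Real.norm_eq_abs]
          rw [heq]
          exact lt_top_iff_ne_top.2 hLfin
        have haInt : Integrable a volume := ⟨haesm, hafin⟩
        have hIa : ∫ y, a y = 0 := by
          have h0 := hmom hc' (fun _ => 0) (by simp)
          simpa using h0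
        have hsub : ∫ y, (T t x y - T t x x₀) * a y = ∫ y, T t x y * a y := by
          have e1 : (fun y => (T t x y - T t x x₀) * a y)
              = fun y => T t x y * a y - T t x x₀ * a y := by
            funext y
            ring
          rw [e1, integral_sub hInt (haInt.const_mul (T t x x₀)), integral_const_mul, hIa,
            mul_zero, sub_zero]
        rw [← hsub]
        apply integral_bound_via
        intro y
        rcases eq_or_ne (a y) 0 with hay | hay
        · simp [hay]
        · have hy : y ∈ cube x₀ r := hsupp (Function.mem_support.mpr hay)
          rw [norm_mul, Real.norm_eq_abs, Real.norm_eq_abs]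
          exact mul_le_mul_of_nonneg_right (claim_osc t ht y hy x₀ hx₀cube) (abs_nonneg _)
      · rw [integral_undef hInt]
        simp
  -- the pointwise kernel bound for case (i)
  refine ⟨?_, ?_, ?_⟩
  · -- case (i)
    intro hcase
    have hbd : ∀ t, 0 < t → ∀ y,
        ‖T t x y * a y‖ ≤ (K₁ * (r ^ M * d ^ (-((n:ℝ)+M)))) * |a y| := by
      intro t ht y
      rcases eq_or_ne (a y) 0 with hay | hay
      · simp [hay]
      · have hy : y ∈ cube x₀ r := hsupp (Function.mem_support.mpr hay)
        obtain ⟨hf1, hf2⟩ := hfar y hy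
        have hxy0 : 0 < dist x y := by linarith
        have hxney : x ≠ y := by
          intro h
          rw [h, dist_self] at hxy0
          exact lt_irrefl 0 hxy0
        have hρyp := hρpos y
        have h1 : T t x y ≤ Cd * (1 + dist x y / ρ y)^(-M) * dist x y ^ (-(n:ℝ)) :=
          hTd t x y ht hxney
        have h2 : (1 + dist x y / ρ y)^(-M) ≤ (dist x y / ρ y)^(-M) :=
          one_add_rpow_neg_le (by positivity) hM.le
        have h3 : (dist x y / ρ y)^(-M) = ρ y ^ M * dist x y ^(-M) := by
          rw [Real.rpow_neg (by positivity), Real.div_rpow hxy0.le hρyp.le, inv_div,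
            div_eq_mul_inv, Real.rpow_neg hxy0.le]
        have h4 : ρ y ^ M ≤ (C₄ * (r / L2const n C₀ k₀)) ^ M := by
          apply Real.rpow_le_rpow hρyp.le _ hM.le
          calc ρ y ≤ C₄ * ρ x₀ := hρy y hy
            _ ≤ C₄ * (r / L2const n C₀ k₀) := by
                apply mul_le_mul_of_nonneg_left _ hC₄.le
                rw [le_div_iff₀ hL2]
                linarith
        have h5 : dist x y ^ (-M) * dist x y ^ (-(n:ℝ)) = dist x y ^ (-((n:ℝ)+M)) := by
          rw [← Real.rpow_add hxy0]
          congr 1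
          ring
        have h6 : dist x y ^ (-((n:ℝ)+M)) ≤ (c₁*d) ^ (-((n:ℝ)+M)) :=
          rpow_neg_anti (by positivity) hf1 (by positivity)
        have hTbd : T t x y ≤ K₁ * (r ^ M * d ^ (-((n:ℝ)+M))) := by
          calc T t x y ≤ Cd * (1 + dist x y / ρ y)^(-M) * dist x y ^ (-(n:ℝ)) := h1
            _ ≤ Cd * ((dist x y / ρ y)^(-M)) * dist x y ^ (-(n:ℝ)) := by
                apply mul_le_mul_of_nonneg_right _ (Real.rpow_nonneg hxy0.le _)
                exact mul_le_mul_of_nonneg_left h2 hCd.le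
            _ = Cd * ρ y ^ M * (dist x y ^ (-M) * dist x y ^ (-(n:ℝ))) := by
                rw [h3]
                ring
            _ = Cd * ρ y ^ M * dist x y ^ (-((n:ℝ)+M)) := by rw [h5]
            _ ≤ Cd * ((C₄ * (r / L2const n C₀ k₀)) ^ M) * ((c₁*d) ^ (-((n:ℝ)+M))) := by
                apply mul_le_mul _ h6 (Real.rpow_nonneg (by positivity) _) (by positivity)
                exact mul_le_mul_of_nonneg_left h4 hCd.le
            _ = K₁ * (r ^ M * d ^ (-((n:ℝ)+M))) := by
                rw [show C₄ * (r / L2const n C₀ k₀) = (C₄ / L2const n C₀ k₀) * r by ring,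
                  Real.mul_rpow (by positivity) hr0.le,
                  Real.mul_rpow hc₁.le hd0.le, hK₁def]
                ring
        rw [norm_mul, Real.norm_eq_abs, Real.norm_eq_abs, abs_of_nonneg (hTpos t x y ht)]
        exact mul_le_mul_of_nonneg_right hTbd (abs_nonneg _)
    unfold TstarK
    apply iSup_le
    intro t
    apply iSup_le
    intro ht
    calc ENNReal.ofReal |∫ y, T t x y * a y|
        ≤ ENNReal.ofReal (K₁ * (r ^ M * d ^ (-((n:ℝ)+M)))) * ∫⁻ y, ENNReal.ofReal |a y| :=
          integral_bound_via _ _ _ (hbd t ht)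
      _ = ENNReal.ofReal K₁ * (∫⁻ y, ENNReal.ofReal |a y|) *
            ENNReal.ofReal (r ^ M * d ^ (-((n:ℝ)+M))) := by
          rw [ENNReal.ofReal_mul hK₁pos.le]
          ring
      _ ≤ ENNReal.ofReal (K₁ + K₂ + K₃) * (∫⁻ y, ENNReal.ofReal |a y|) *
            ENNReal.ofReal (r ^ M * d ^ (-((n:ℝ)+M))) := by
          exact mul_le_mul_left (mul_le_mul_left
            (ENNReal.ofReal_le_ofReal (by linarith)) _) _
  · -- case (ii)
    intro hcase _hclose
    rcases eq_or_ne (∫⁻ y, ENNReal.ofReal |a y|) ⊤ with hL | hL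
    · have hXpos : 0 < r^δ * d^(-((n:ℝ)+δ)) := by positivity
      rw [hL, ENNReal.mul_top (ENNReal.ofReal_pos.2 hCpos).ne',
        ENNReal.top_mul (ENNReal.ofReal_pos.2 hXpos).ne']
      exact le_top
    · unfold TstarK
      apply iSup_le
      intro t
      apply iSup_le
      intro ht
      calc ENNReal.ofReal |∫ y, T t x y * a y|
          ≤ ENNReal.ofReal (3 * CM * ((Real.sqrt n * r)/Real.sqrt t)^δ *
              (1 + Real.sqrt n * d / Real.sqrt t) *
              (t^(-(n:ℝ)/2) * (1 + Real.sqrt t/(C₄*ρ x₀))^(-M) * Real.exp (-(c₂*d^2)/t))) *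
            ∫⁻ y, ENNReal.ofReal |a y| := key t ht hcase hL
        _ ≤ ENNReal.ofReal (K₂ * (r^δ * d^(-((n:ℝ)+δ)))) * ∫⁻ y, ENNReal.ofReal |a y| :=
            mul_le_mul_left (ENNReal.ofReal_le_ofReal (claim2 t ht)) _
        _ = ENNReal.ofReal K₂ * (∫⁻ y, ENNReal.ofReal |a y|) *
              ENNReal.ofReal (r^δ * d^(-((n:ℝ)+δ))) := by
            rw [ENNReal.ofReal_mul hK₂pos.le]
            ring
        _ ≤ ENNReal.ofReal (K₁ + K₂ + K₃) * (∫⁻ y, ENNReal.ofReal |a y|) *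
              ENNReal.ofReal (r^δ * d^(-((n:ℝ)+δ))) := by
            exact mul_le_mul_left (mul_le_mul_left
              (ENNReal.ofReal_le_ofReal (by linarith)) _) _
  · -- case (iii)
    intro hcase _hfar2
    rcases eq_or_ne (∫⁻ y, ENNReal.ofReal |a y|) ⊤ with hL | hL
    · have hXpos : 0 < r^δ * d^(-((n:ℝ)+δ)) * (ρ x₀/d)^M := by positivity
      rw [hL, ENNReal.mul_top (ENNReal.ofReal_pos.2 hCpos).ne',
        ENNReal.top_mul (ENNReal.ofReal_pos.2 hXpos).ne']
      exact le_top
    · unfold TstarK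
      apply iSup_le
      intro t
      apply iSup_le
      intro ht
      calc ENNReal.ofReal |∫ y, T t x y * a y|
          ≤ ENNReal.ofReal (3 * CM * ((Real.sqrt n * r)/Real.sqrt t)^δ *
              (1 + Real.sqrt n * d / Real.sqrt t) *
              (t^(-(n:ℝ)/2) * (1 + Real.sqrt t/(C₄*ρ x₀))^(-M) * Real.exp (-(c₂*d^2)/t))) *
            ∫⁻ y, ENNReal.ofReal |a y| := key t ht hcase hL
        _ ≤ ENNReal.ofReal (K₃ * (r^δ * d^(-((n:ℝ)+δ)) * (ρ x₀/d)^M)) *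
              ∫⁻ y, ENNReal.ofReal |a y| :=
            mul_le_mul_left (ENNReal.ofReal_le_ofReal (claim3 t ht)) _
        _ = ENNReal.ofReal K₃ * (∫⁻ y, ENNReal.ofReal |a y|) *
              ENNReal.ofReal (r^δ * d^(-((n:ℝ)+δ)) * (ρ x₀/d)^M) := by
            rw [ENNReal.ofReal_mul hK₃pos.le]
            ring
        _ ≤ ENNReal.ofReal (K₁ + K₂ + K₃) * (∫⁻ y, ENNReal.ofReal |a y|) *
              ENNReal.ofReal (r^δ * d^(-((n:ℝ)+δ)) * (ρ x₀/d)^M) := by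
            exact mul_le_mul_left (mul_le_mul_left
              (ENNReal.ofReal_le_ofReal (by linarith)) _) _


end
end
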